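/- arXiv:0801.0390 — 9 statements merged into one kernel-verified Lean document; each statement's English description precedes it below -/
import Mathlib

section
/- Let F : ℝ^d × ℝ^d → ℝ be continuously differentiable and satisfy: (1) non-negativity: F(x,y) ≥ 0 for all x,y; (2) identity of indiscernibles: F(x,y) = 0 if and only if x = y; (3) the expectation is the lowest distortion's predictor: for every m ≥ 1, every family of points x_1,…,x_m ∈ ℝ^d and every family of weights κ_1,…,κ_m > 0 with Σ_i κ_i = 1, the function y ↦ Σ_i κ_i F(x_i, y) attains its minimum over ℝ^d exactly at the point y = Σ_i κ_i x_i. Then there exists a strictly convex differentiable function φ : ℝ^d → ℝ such that F(x,y) = φ(x) − φ(y) − ⟨x − y, ∇φ(y)⟩ for all x,y ∈ ℝ^d. -/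
/-!
At the mean `z` of any finite family, the partial gradients `∇₂F(xᵢ, z)` sum to zero. Applied to
the pairs `z ± w` and the triples `z + a, z + b, z - a - b`, this makes `w ↦ ∇₂F(z + w, z)`
additive. Hence the second difference `F(p+v+w, ·) - F(p+v, ·) - F(p+w, ·) + F(p, ·)` has zero
gradient and is constant, so `x ↦ F(x, y) - F(x, 0)` is continuous and additive up to a constant,
i.e. affine with some linear part `ℓ_y`. With `φ := F(·, 0)` this reads
`F(x, y) = φ x - φ y + ℓ_y (x - y)`. As `F(·, y)` is minimal at `y`, `∇φ(y) = -ℓ_y`, and `F > 0`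
off the diagonal makes `φ` strictly convex.
-/

open scoped RealInnerProductSpace BigOperators

open Set

theorem StrictConvexOn.of_lt_add_linearMap {E : Type*} [AddCommGroup E] [Module ℝ E]
    {f : E → ℝ} (L : E → E →ₗ[ℝ] ℝ) (h : ∀ x y, x ≠ y → f y + L y (x - y) < f x) :
    StrictConvexOn ℝ univ f := by
  refine ⟨convex_univ, fun x _ y _ hxy a b ha hb hab => ?_⟩
  set z := a • x + b • y
  have hxz : x - z = b • (x - y) := by
    linear_combination (norm := module) (-hab) • x
  have hyz : y - z = a • (y - x) := by
    linear_combination (norm := module) (-hab) • y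
  have hx := h x z (sub_ne_zero.mp (hxz ▸ smul_ne_zero hb.ne' (sub_ne_zero.mpr hxy)))
  have hy := h y z (sub_ne_zero.mp (hyz ▸ smul_ne_zero ha.ne' (sub_ne_zero.mpr hxy.symm)))
  have htangent : a * L z (x - z) + b * L z (y - z) = 0 := by
    rw [hxz, hyz, map_smul, map_smul, smul_eq_mul, smul_eq_mul, ← neg_sub x y, map_neg]
    ring
  calc f z = a * (f z + L z (x - z)) + b * (f z + L z (y - z)) := by
        linear_combination (-f z) * hab - htangent
    _ < a * f x + b * f y := by gcongr

section

variable {E : Type*} [NormedAddCommGroup E] [NormedSpace ℝ E] {F : E → E → ℝ}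

theorem differentiable_right_of_uncurry (hF : Differentiable ℝ fun q : E × E => F q.1 q.2)
    (x : E) : Differentiable ℝ (F x) :=
  hF.comp ((differentiable_const x).prodMk differentiable_id)

theorem sum_fderiv_eq_zero_of_isMinOn {ι : Type*} [Fintype ι] {f : ι → E → ℝ} {z : E}
    (hdiff : ∀ i, DifferentiableAt ℝ (f i) z) (hz : IsMinOn (fun y => ∑ i, f i y) univ z) :
    ∑ i, fderiv ℝ (f i) z = 0 := by
  rw [← fderiv_fun_sum fun i _ => hdiff i]
  exact (hz.isLocalMin Filter.univ_mem).fderiv_eq_zero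

theorem sum_fderiv_mean_eq_zero (hdiff : ∀ x, Differentiable ℝ (F x))
    (hmin : ∀ m : ℕ, 1 ≤ m → ∀ (x : Fin m → E) (κ : Fin m → ℝ), (∀ i, 0 < κ i) →
      ∑ i, κ i = 1 → ∀ y, y ≠ ∑ i, κ i • x i →
        ∑ i, κ i * F (x i) (∑ j, κ j • x j) < ∑ i, κ i * F (x i) y)
    (m : ℕ) (x : Fin m → E) : ∑ i, fderiv ℝ (F (x i)) ((m : ℝ)⁻¹ • ∑ j, x j) = 0 := by
  rcases Nat.eq_zero_or_pos m with rfl | hm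
  · simp
  refine sum_fderiv_eq_zero_of_isMinOn (f := fun i => F (x i)) (fun i => hdiff _ _)
    (isMinOn_univ_iff.mpr fun y => ?_)
  have hmean : ∑ j, (m : ℝ)⁻¹ • x j = (m : ℝ)⁻¹ • ∑ j, x j := Finset.smul_sum.symm
  rcases eq_or_ne y ((m : ℝ)⁻¹ • ∑ j, x j) with rfl | hy
  · exact le_rfl
  have hκ : ∑ _ : Fin m, (m : ℝ)⁻¹ = 1 := by simp [hm.ne']
  have h := hmin m hm x (fun _ => (m : ℝ)⁻¹) (fun _ => by positivity) hκ y (hmean ▸ hy)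
  rw [hmean, ← Finset.mul_sum, ← Finset.mul_sum] at h
  exact (lt_of_mul_lt_mul_left h (inv_nonneg.mpr m.cast_nonneg)).le

variable (hstat : ∀ m (x : Fin m → E), ∑ i, fderiv ℝ (F (x i)) ((m : ℝ)⁻¹ • ∑ j, x j) = 0)
include hstat

theorem fderiv_sub_eq_neg_fderiv_add (z w : E) :
    fderiv ℝ (F (z - w)) z = -fderiv ℝ (F (z + w)) z := by
  have h := hstat 2 ![z + w, z - w]
  have hmean : ((2 : ℕ) : ℝ)⁻¹ • ∑ j, ![z + w, z - w] j = z := by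
    simp only [Fin.sum_univ_two, Matrix.cons_val, Nat.cast_ofNat]
    module
  rw [hmean, Fin.sum_univ_two] at h
  exact (add_eq_zero_iff_neg_eq.mp h).symm

theorem fderiv_add_add (z a b : E) :
    fderiv ℝ (F (z + (a + b))) z = fderiv ℝ (F (z + a)) z + fderiv ℝ (F (z + b)) z := by
  have h := hstat 3 ![z + a, z + b, z - (a + b)]
  have hmean : ((3 : ℕ) : ℝ)⁻¹ • ∑ j, ![z + a, z + b, z - (a + b)] j = z := by
    simp only [Fin.sum_univ_three, Matrix.cons_val, Nat.cast_ofNat]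
    module
  rw [hmean, Fin.sum_univ_three] at h
  simp only [Matrix.cons_val, fderiv_sub_eq_neg_fderiv_add hstat] at h
  linear_combination (norm := module) -h

theorem secondDifference_const (hdiff : ∀ x, Differentiable ℝ (F x)) (p v w z z' : E) :
    F (p + (v + w)) z - F (p + v) z - F (p + w) z + F p z
      = F (p + (v + w)) z' - F (p + v) z' - F (p + w) z' + F p z' := by
  refine is_const_of_fderiv_eq_zero
    (f := fun z => F (p + (v + w)) z - F (p + v) z - F (p + w) z + F p z) (by fun_prop)
    (fun z => ?_) z z'
  rw [fderiv_fun_add (by fun_prop) (by fun_prop), fderiv_fun_sub (by fun_prop) (by fun_prop),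
    fderiv_fun_sub (by fun_prop) (by fun_prop)]
  obtain ⟨u, rfl⟩ : ∃ u, p = z + u := ⟨p - z, by abel⟩
  simp only [add_assoc]
  rw [← add_assoc u, fderiv_add_add hstat z (u + v) w, fderiv_add_add hstat z u v,
    fderiv_add_add hstat z u w]
  abel

theorem exists_continuousLinearMap_sub_eq (hF : Differentiable ℝ fun q : E × E => F q.1 q.2)
    (y z z' : E) : ∃ ℓ : E →L[ℝ] ℝ, ∀ x, F x z - F x z' = F y z - F y z' + ℓ (x - y) := by
  let ℓ : E →+ ℝ := AddMonoidHom.mk' (fun v => F (y + v) z - F y z - (F (y + v) z' - F y z'))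
    fun v w => by
      linarith [secondDifference_const hstat (differentiable_right_of_uncurry hF) y v w z z']
  have hℓ : Continuous ℓ := by
    have hc (z : E) : Continuous fun v => F (y + v) z :=
      hF.continuous.comp (by fun_prop : Continuous fun v => (y + v, z))
    exact ((hc z).sub continuous_const).sub ((hc z').sub continuous_const)
  refine ⟨ℓ.toRealLinearMap hℓ, fun x => ?_⟩
  simp only [AddMonoidHom.coe_toRealLinearMap, AddMonoidHom.mk'_apply, ℓ, add_sub_cancel]
  ring

end

theorem exists_bregman_of_sum_fderiv_mean_eq_zero {E : Type*} [NormedAddCommGroup E]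
    [InnerProductSpace ℝ E] [CompleteSpace E] {F : E → E → ℝ}
    (hF : Differentiable ℝ fun q : E × E => F q.1 q.2)
    (hstat : ∀ m (x : Fin m → E), ∑ i, fderiv ℝ (F (x i)) ((m : ℝ)⁻¹ • ∑ j, x j) = 0)
    (hnonneg : ∀ x y, 0 ≤ F x y) (hind : ∀ x y, F x y = 0 ↔ x = y) :
    ∃ φ : E → ℝ, StrictConvexOn ℝ univ φ ∧ Differentiable ℝ φ ∧
      ∀ x y, F x y = φ x - φ y - ⟪x - y, gradient φ y⟫ := by
  choose ℓ hℓ using fun y => exists_continuousLinearMap_sub_eq hstat hF y y 0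
  set φ : E → ℝ := fun x => F x 0
  have hF_eq (x y : E) : F x y = φ x - φ y + ℓ y (x - y) := by
    linarith [hℓ y x, (hind y y).2 rfl]
  have hφ (y : E) : HasFDerivAt φ (-ℓ y) y := by
    have hmin : IsLocalMin (fun x => F x y) y :=
      .of_forall fun x => ((hind y y).2 rfl).trans_le (hnonneg x y)
    have hFy : HasFDerivAt (fun x => F x y) (0 : E →L[ℝ] ℝ) y := by
      rw [← hmin.fderiv_eq_zero]
      exact (hF.comp (differentiable_id.prodMk (differentiable_const y)) y).hasFDerivAt
    have h := (hFy.sub ((ℓ y).hasFDerivAt.sub_const (ℓ y y))).add_const (φ y)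
    rw [zero_sub] at h
    refine h.congr_of_eventuallyEq (.of_forall fun x => ?_)
    simp only [Pi.sub_apply]
    linarith [hF_eq x y, map_sub (ℓ y) x y]
  refine ⟨φ, .of_lt_add_linearMap (fun y => (-ℓ y : E →L[ℝ] ℝ)) fun x y hxy => ?_,
    fun y => (hφ y).differentiableAt, fun x y => ?_⟩
  · have hpos : 0 < F x y := (hnonneg x y).lt_of_ne fun h => hxy ((hind x y).1 h.symm)
    simp only [ContinuousLinearMap.coe_coe, neg_apply]
    linarith [hF_eq x y]
  · rw [gradient, (hφ y).fderiv, real_inner_comm, InnerProductSpace.toDual_symm_apply,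
      neg_apply, sub_neg_eq_add]
    exact hF_eq x y

/-- A continuously differentiable non-negative function `F` on `ℝ^d × ℝ^d`
satisfying the identity of indiscernibles and such that, for any finite family of points and
positive weights summing to one, the weighted distortion `y ↦ Σ κᵢ F(xᵢ, y)` is minimized
exactly at the weighted mean, must be a Bregman divergence. -/
theorem statement_0 (d : ℕ)
    (F : EuclideanSpace ℝ (Fin d) → EuclideanSpace ℝ (Fin d) → ℝ)
    (hF : ContDiff ℝ 1 fun p : EuclideanSpace ℝ (Fin d) × EuclideanSpace ℝ (Fin d) =>
      F p.1 p.2)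
    (hnonneg : ∀ x y, 0 ≤ F x y)
    (hind : ∀ x y, F x y = 0 ↔ x = y)
    (hmin : ∀ m : ℕ, 1 ≤ m → ∀ (x : Fin m → EuclideanSpace ℝ (Fin d)) (κ : Fin m → ℝ),
      (∀ i, 0 < κ i) → (∑ i, κ i) = 1 →
      ∀ y : EuclideanSpace ℝ (Fin d), y ≠ (∑ i, κ i • x i) →
        (∑ i, κ i * F (x i) (∑ j, κ j • x j)) < ∑ i, κ i * F (x i) y) :
    ∃ φ : EuclideanSpace ℝ (Fin d) → ℝ,
      StrictConvexOn ℝ Set.univ φ ∧ Differentiable ℝ φ ∧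
      ∀ x y, F x y = φ x - φ y - ⟪x - y, gradient φ y⟫ := by
  have hdiff := hF.differentiable one_ne_zero
  exact exists_bregman_of_sum_fderiv_mean_eq_zero hdiff
    (sum_fderiv_mean_eq_zero (differentiable_right_of_uncurry hdiff) hmin) hnonneg hind
end

section
/- Let φ : ℝ^d → ℝ be strictly convex and differentiable, let x_1,…,x_m ∈ ℝ^d and γ_1,…,γ_m > 0 with Γ = Σ_i γ_i. Then the point ȳ = (1/Γ) Σ_i γ_i x_i is the unique minimizer over y ∈ ℝ^d of the weighted total Bregman distortion y ↦ Σ_i γ_i D_φ(x_i‖y); that is, Σ_i γ_i D_φ(x_i‖y) > Σ_i γ_i D_φ(x_i‖ȳ) for every y ≠ ȳ. -/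
/-!
Writing `Γ ȳ = Σ γᵢ xᵢ`, the weighted distortion satisfies the compensation identity
`Σ γᵢ D_φ(xᵢ‖y) = Σ γᵢ D_φ(xᵢ‖ȳ) + Γ D_φ(ȳ‖y)`: the linear terms `⟨xᵢ − y, ∇φ(y)⟩` average to
`⟨ȳ − y, ∇φ(y)⟩`, and those at `ȳ` average to zero. Strict convexity makes `D_φ(ȳ‖y) > 0` for
`y ≠ ȳ`, by comparing the derivative of `φ` along the segment from `y` to `ȳ` with its secant slope.
-/

open scoped RealInnerProductSpace BigOperators

/-- The Bregman divergence `D_φ(x‖y) = φ(x) − φ(y) − ⟨x − y, ∇φ(y)⟩`. -/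
noncomputable def bregman {d : ℕ} (φ : EuclideanSpace ℝ (Fin d) → ℝ)
    (x y : EuclideanSpace ℝ (Fin d)) : ℝ :=
  φ x - φ y - ⟪x - y, gradient φ y⟫

theorem StrictConvexOn.comp_affineMap {𝕜 E F β : Type*} [Field 𝕜] [PartialOrder 𝕜]
    [AddCommGroup E] [AddCommGroup F] [AddCommMonoid β] [PartialOrder β]
    [Module 𝕜 E] [Module 𝕜 F] [SMul 𝕜 β] {f : F → β} {s : Set F}
    (g : E →ᵃ[𝕜] F) (hg : Function.Injective g) (hf : StrictConvexOn 𝕜 s f) :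
    StrictConvexOn 𝕜 (g ⁻¹' s) (f ∘ g) :=
  ⟨hf.1.affine_preimage g, fun x hx y hy hxy a b ha hb hab =>
    calc
      (f ∘ g) (a • x + b • y) = f (a • g x + b • g y) := by
        rw [Function.comp_apply, Convex.combo_affine_apply hab]
      _ < a • f (g x) + b • f (g y) := hf.2 hx hy (hg.ne hxy) ha hb hab⟩

theorem StrictConvexOn.add_fderiv_lt {E : Type*} [NormedAddCommGroup E] [NormedSpace ℝ E]
    {f : E → ℝ} {f' : E →L[ℝ] ℝ} {s : Set E} {x y : E}
    (hf : StrictConvexOn ℝ s f) (hx : x ∈ s) (hy : y ∈ s) (hxy : x ≠ y)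
    (hderiv : HasFDerivAt f f' y) :
    f y + f' (x - y) < f x := by
  set ℓ := AffineMap.lineMap (k := ℝ) y x
  have hℓ : StrictConvexOn ℝ (ℓ ⁻¹' s) (f ∘ ℓ) :=
    hf.comp_affineMap ℓ (AffineMap.lineMap_injective ℝ hxy.symm)
  have hderiv_line : HasDerivAt (f ∘ ℓ) (f' (x - y)) 0 := by
    refine HasFDerivAt.comp_hasDerivAt (0 : ℝ) ?_ AffineMap.hasDerivAt_lineMap
    rwa [AffineMap.lineMap_apply_zero]
  have hslope := hℓ.lt_slope_of_hasDerivAt (by simpa [ℓ] using hy) (by simpa [ℓ] using hx)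
    one_pos hderiv_line
  simp only [slope, Function.comp_apply, AffineMap.lineMap_apply_one,
    AffineMap.lineMap_apply_zero, sub_zero, inv_one, one_smul, vsub_eq_sub, ℓ] at hslope
  linarith

theorem bregman_pos {d : ℕ} {φ : EuclideanSpace ℝ (Fin d) → ℝ}
    (hconv : StrictConvexOn ℝ Set.univ φ) (hdiff : Differentiable ℝ φ)
    {x y : EuclideanSpace ℝ (Fin d)} (hxy : x ≠ y) : 0 < bregman φ x y := by
  have := hconv.add_fderiv_lt (Set.mem_univ x) (Set.mem_univ y) hxy
    (hdiff y).hasGradientAt.hasFDerivAt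
  rw [InnerProductSpace.toDual_apply_apply, real_inner_comm] at this
  rw [bregman]
  linarith

theorem sum_mul_inner_sub_of_barycenter {ι E : Type*} [NormedAddCommGroup E]
    [InnerProductSpace ℝ E] {s : Finset ι} {γ : ι → ℝ} {x : ι → E} {ybar : E}
    (hbar : ∑ i ∈ s, γ i • x i = (∑ i ∈ s, γ i) • ybar)
    (z g : E) :
    ∑ i ∈ s, γ i * ⟪x i - z, g⟫ = (∑ i ∈ s, γ i) * ⟪ybar - z, g⟫ := by
  simp_rw [← real_inner_smul_left, ← sum_inner, smul_sub, Finset.sum_sub_distrib, hbar,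
    ← Finset.sum_smul]

theorem sum_mul_bregman_of_barycenter {ι : Type*} {d : ℕ} {φ : EuclideanSpace ℝ (Fin d) → ℝ}
    {s : Finset ι} {γ : ι → ℝ} {x : ι → EuclideanSpace ℝ (Fin d)} {ybar : EuclideanSpace ℝ (Fin d)}
    (hbar : ∑ i ∈ s, γ i • x i = (∑ i ∈ s, γ i) • ybar) (y : EuclideanSpace ℝ (Fin d)) :
    ∑ i ∈ s, γ i * bregman φ (x i) y
      = ∑ i ∈ s, γ i * bregman φ (x i) ybar + (∑ i ∈ s, γ i) * bregman φ ybar y := by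
  have expand : ∀ z, ∑ i ∈ s, γ i * bregman φ (x i) z
      = ∑ i ∈ s, γ i * φ (x i) - (∑ i ∈ s, γ i) * φ z - ∑ i ∈ s, γ i * ⟪x i - z, gradient φ z⟫ := by
    intro z
    simp only [bregman, mul_sub, Finset.sum_sub_distrib, Finset.sum_mul]
  rw [expand, expand, sum_mul_inner_sub_of_barycenter hbar, sum_mul_inner_sub_of_barycenter hbar,
    sub_self, inner_zero_left, bregman]
  ring

/-- the weighted arithmetic mean `ȳ = (1/Γ) Σ γᵢ xᵢ` is the unique minimizer of
the weighted total Bregman distortion `y ↦ Σ γᵢ D_φ(xᵢ‖y)`. -/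
theorem statement_1 (d m : ℕ) (hm : 1 ≤ m)
    (φ : EuclideanSpace ℝ (Fin d) → ℝ)
    (hconv : StrictConvexOn ℝ Set.univ φ) (hdiff : Differentiable ℝ φ)
    (x : Fin m → EuclideanSpace ℝ (Fin d))
    (γ : Fin m → ℝ) (hγ : ∀ i, 0 < γ i)
    (Γ : ℝ) (hΓ : Γ = ∑ i, γ i)
    (ybar : EuclideanSpace ℝ (Fin d)) (hybar : ybar = (1 / Γ) • ∑ i, γ i • x i) :
    ∀ y : EuclideanSpace ℝ (Fin d), y ≠ ybar →
      (∑ i, γ i * bregman φ (x i) ybar) < ∑ i, γ i * bregman φ (x i) y := by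
  intro y hy
  have : Nonempty (Fin m) := ⟨⟨0, hm⟩⟩
  have hΓ_pos : 0 < Γ := hΓ ▸ Finset.sum_pos (fun i _ => hγ i) Finset.univ_nonempty
  have hbar : ∑ i, γ i • x i = (∑ i, γ i) • ybar := by
    rw [hybar, ← hΓ, smul_smul, mul_one_div_cancel hΓ_pos.ne', one_smul]
  rw [sum_mul_bregman_of_barycenter hbar y, ← hΓ, lt_add_iff_pos_right]
  exact mul_pos hΓ_pos (bregman_pos hconv hdiff hy.symm)
end

section
/- Let I ⊆ ℝ be an open interval, let φ : I → ℝ be strictly convex and continuously differentiable with φ' a bijection from I onto an open interval J, fix m ≥ 1 and weights κ_1,…,κ_m > 0 with Σ_i κ_i = 1, and define μ_φ : I^m → ℝ by μ_φ(x_1,…,x_m) = (φ')^{-1}(Σ_i κ_i φ'(x_i)) and the dual aggregator μ_{φ⋆} : J^m → ℝ by μ_{φ⋆}(y_1,…,y_m) = φ'(Σ_i κ_i (φ')^{-1}(y_i)). Then μ_φ is concave on I^m if and only if μ_{φ⋆} is convex on J^m. -/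
/-!
Write `f = φ'`, `g = (φ')⁻¹` and `M_w = g (∑ wⱼ f (·ⱼ))`, `N_w = f (∑ wⱼ g (·ⱼ))`, so that
`μ_φ = M_κ` and `μ_{φ⋆} = N_κ`. Because `f` and `g` are increasing and inverse to each other,
applying `f` to Jensen's inequality `∑ wⱼ M_κ (xⱼ) ≤ M_κ (∑ wⱼ xⱼ)` and substituting
`y i j = f (x j i)` gives `N_w (∑ κᵢ yᵢ) ≤ ∑ κᵢ N_w (yᵢ)`: `M_κ` satisfies the concave Jensen
inequality for the weights `w` exactly when `N_w` satisfies the convex one for the weights `κ`.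

With two-point weights `w = (a, 1 - a)` this says that `μ_φ` is concave iff every two-variable
mean `N_(a,1-a)` satisfies the convex `κ`-Jensen inequality, and that `μ_{φ⋆}` is convex iff every
`M_(b,1-b)` satisfies the concave one. For `m ≥ 2` some `κᵢ` lies in `(0, 1)`, and a continuous
function obeying Jensen's inequality for a single weight in `(0, 1)` is convex; so both conditions
become "all `N_(a,1-a)` are convex", resp. "all `M_(b,1-b)` are concave", on the square, and these
two are equivalent by the same duality with the two pairs of weights swapped. For `m = 1` both
aggregators are the identity.
-/

open Set

theorem IsClosed.Icc_subset_of_forall_combo_mem {T : Set ℝ} {a b t : ℝ} (hT : IsClosed T)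
    (ha : a ∈ T) (hb : b ∈ T) (ht0 : 0 < t) (ht1 : t < 1)
    (hcombo : ∀ c ∈ T, ∀ d ∈ T, t * c + (1 - t) * d ∈ T) : Icc a b ⊆ T := by
  have hseq : ∀ x ∈ T, ∀ n : ℕ, x + (1 - t) ^ n * (b - x) ∈ T := by
    intro x hx n
    induction n with
    | zero => simpa using hb
    | succ n ih => convert hcombo x hx _ ih using 1; ring
  refine (hT.inter isClosed_Icc).Icc_subset_of_forall_exists_gt ha
    fun x ⟨hxT, _, hxb⟩ y hxy => ?_
  have hbx : 0 < b - x := sub_pos.2 hxb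
  obtain ⟨n, hn⟩ := exists_pow_lt_of_lt_one (div_pos (sub_pos.2 (mem_Ioi.1 hxy)) hbx)
    (by linarith : 1 - t < 1)
  rw [lt_div_iff₀ hbx] at hn
  have hpow := pow_pos (by linarith : 0 < 1 - t) n
  exact ⟨_, hseq x hxT n, by nlinarith, by linarith⟩

theorem convexOn_of_continuousOn_of_combo_le {E : Type*} [AddCommGroup E] [Module ℝ E]
    [TopologicalSpace E] [ContinuousAdd E] [ContinuousSMul ℝ E] {S : Set E} {F : E → ℝ} {t : ℝ}
    (hS : Convex ℝ S) (hF : ContinuousOn F S) (ht0 : 0 < t) (ht1 : t < 1)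
    (H : ∀ p ∈ S, ∀ q ∈ S, F (t • p + (1 - t) • q) ≤ t * F p + (1 - t) * F q) :
    ConvexOn ℝ S F := by
  refine ⟨hS, fun x hx y hy a b ha hb hab => ?_⟩
  obtain rfl : b = 1 - a := by linarith
  set γ : ℝ → E := fun c => c • x + (1 - c) • y
  have hγS : ∀ c ∈ Icc (0 : ℝ) 1, γ c ∈ S := fun c hc =>
    hS hx hy hc.1 (by linarith [hc.2]) (by ring)
  set T := {c ∈ Icc (0 : ℝ) 1 | F (γ c) ≤ c * F x + (1 - c) * F y}
  have hT : IsClosed T := isClosed_Icc.isClosed_le (hF.comp (by fun_prop) hγS) (by fun_prop)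
  have hcombo : ∀ c ∈ T, ∀ d ∈ T, t * c + (1 - t) * d ∈ T := by
    rintro c ⟨hc, hcF⟩ d ⟨hd, hdF⟩
    refine ⟨⟨by nlinarith [hc.1, hd.1], by nlinarith [hc.2, hd.2]⟩, ?_⟩
    have hγ : γ (t * c + (1 - t) * d) = t • γ c + (1 - t) • γ d := by simp only [γ]; module
    calc F (γ (t * c + (1 - t) * d)) ≤ t * F (γ c) + (1 - t) * F (γ d) :=
          hγ ▸ H _ (hγS c hc) _ (hγS d hd)
      _ ≤ t * (c * F x + (1 - c) * F y) + (1 - t) * (d * F x + (1 - d) * F y) := by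
          gcongr
      _ = (t * c + (1 - t) * d) * F x + (1 - (t * c + (1 - t) * d)) * F y := by ring
  have h01 := hT.Icc_subset_of_forall_combo_mem (a := 0) (b := 1)
    ⟨⟨le_rfl, zero_le_one⟩, by simp [γ]⟩ ⟨⟨zero_le_one, le_rfl⟩, by simp [γ]⟩ ht0 ht1 hcombo
  simpa [γ] using (h01 ⟨ha, by linarith⟩).2

section Jensen

variable {ι E : Type*} [Fintype ι] [AddCommGroup E] [Module ℝ E]

def JensenConvexOn (w : ι → ℝ) (S : Set E) (F : E → ℝ) : Prop :=
  ∀ z : ι → E, (∀ i, z i ∈ S) → F (∑ i, w i • z i) ≤ ∑ i, w i • F (z i)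

def JensenConcaveOn (w : ι → ℝ) (S : Set E) (F : E → ℝ) : Prop :=
  ∀ z : ι → E, (∀ i, z i ∈ S) → ∑ i, w i • F (z i) ≤ F (∑ i, w i • z i)

variable {w : ι → ℝ} {S : Set E} {F : E → ℝ}

theorem jensenConvexOn_neg_iff : JensenConvexOn w S (-F) ↔ JensenConcaveOn w S F := by
  simp only [JensenConvexOn, JensenConcaveOn, Pi.neg_apply, smul_neg, Finset.sum_neg_distrib,
    neg_le_neg_iff]

theorem Fintype.sum_smul_ite_eq [DecidableEq ι] (hw : ∑ i, w i = 1) (i₀ : ι) (p q : E) :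
    ∑ i, w i • (if i = i₀ then p else q) = w i₀ • p + (1 - w i₀) • q := by
  have h : ∀ i, w i • (if i = i₀ then p else q) = w i • q + if i = i₀ then w i • (p - q) else 0 :=
    fun i => by split_ifs <;> simp [smul_sub]
  simp only [h, Finset.sum_add_distrib, ← Finset.sum_smul, hw, Finset.sum_ite_eq',
    Finset.mem_univ, if_true]
  module

theorem ConvexOn.jensenConvexOn (hF : ConvexOn ℝ S F) (hw0 : ∀ i, 0 ≤ w i) (hw1 : ∑ i, w i = 1) :
    JensenConvexOn w S F := fun _ hz =>
  hF.map_sum_le (fun i _ => hw0 i) hw1 fun i _ => hz i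

theorem ConcaveOn.jensenConcaveOn (hF : ConcaveOn ℝ S F) (hw0 : ∀ i, 0 ≤ w i)
    (hw1 : ∑ i, w i = 1) : JensenConcaveOn w S F := fun _ hz =>
  hF.le_map_sum (fun i _ => hw0 i) hw1 fun i _ => hz i

variable [TopologicalSpace E] [ContinuousAdd E] [ContinuousSMul ℝ E] {i₀ : ι}

theorem JensenConvexOn.convexOn (h : JensenConvexOn w S F) (hS : Convex ℝ S)
    (hF : ContinuousOn F S) (hw1 : ∑ i, w i = 1) (hi₀ : 0 < w i₀) (hi₀' : w i₀ < 1) :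
    ConvexOn ℝ S F := by
  classical
  refine convexOn_of_continuousOn_of_combo_le hS hF hi₀ hi₀' fun p hp q hq => ?_
  have hjensen := h (fun i => if i = i₀ then p else q) fun i => by split_ifs <;> assumption
  simp only [apply_ite F, Fintype.sum_smul_ite_eq hw1] at hjensen
  simpa only [smul_eq_mul] using hjensen

theorem JensenConcaveOn.concaveOn (h : JensenConcaveOn w S F) (hS : Convex ℝ S)
    (hF : ContinuousOn F S) (hw1 : ∑ i, w i = 1) (hi₀ : 0 < w i₀) (hi₀' : w i₀ < 1) :
    ConcaveOn ℝ S F :=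
  neg_convexOn_iff.1 <| (jensenConvexOn_neg_iff.2 h).convexOn hS hF.neg hw1 hi₀ hi₀'

theorem jensenConvexOn_iff_convexOn (hS : Convex ℝ S) (hF : ContinuousOn F S)
    (hw0 : ∀ i, 0 ≤ w i) (hw1 : ∑ i, w i = 1) (hi₀ : 0 < w i₀) (hi₀' : w i₀ < 1) :
    JensenConvexOn w S F ↔ ConvexOn ℝ S F :=
  ⟨fun h => h.convexOn hS hF hw1 hi₀ hi₀', fun h => h.jensenConvexOn hw0 hw1⟩

theorem jensenConcaveOn_iff_concaveOn (hS : Convex ℝ S) (hF : ContinuousOn F S)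
    (hw0 : ∀ i, 0 ≤ w i) (hw1 : ∑ i, w i = 1) (hi₀ : 0 < w i₀) (hi₀' : w i₀ < 1) :
    JensenConcaveOn w S F ↔ ConcaveOn ℝ S F :=
  ⟨fun h => h.concaveOn hS hF hw1 hi₀ hi₀', fun h => h.jensenConcaveOn hw0 hw1⟩

end Jensen

section TwoPoint

variable {E : Type*} [AddCommGroup E] [Module ℝ E] {S : Set E} {F : E → ℝ}

theorem nonneg_vecCons_one_sub {a : ℝ} (ha : a ∈ Icc (0 : ℝ) 1) : ∀ j, 0 ≤ ![a, 1 - a] j :=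
  Fin.forall_fin_two.2 ⟨ha.1, sub_nonneg.2 ha.2⟩

theorem sum_vecCons_one_sub (a : ℝ) : ∑ j, ![a, 1 - a] j = 1 := by simp

theorem convexOn_iff_forall_jensenConvexOn (hS : Convex ℝ S) :
    ConvexOn ℝ S F ↔ ∀ a ∈ Icc (0 : ℝ) 1, JensenConvexOn ![a, 1 - a] S F := by
  refine ⟨fun hF a ha => hF.jensenConvexOn (nonneg_vecCons_one_sub ha) (sum_vecCons_one_sub a),
    fun H => ⟨hS, fun x hx y hy a b ha hb hab => ?_⟩⟩
  obtain rfl : b = 1 - a := by linarith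
  simpa using H a ⟨ha, by linarith⟩ ![x, y] (Fin.forall_fin_two.2 ⟨hx, hy⟩)

theorem concaveOn_iff_forall_jensenConcaveOn (hS : Convex ℝ S) :
    ConcaveOn ℝ S F ↔ ∀ a ∈ Icc (0 : ℝ) 1, JensenConcaveOn ![a, 1 - a] S F := by
  simp only [← neg_convexOn_iff, convexOn_iff_forall_jensenConvexOn hS, jensenConvexOn_neg_iff]

end TwoPoint

theorem Convex.sum_mul_mem_of_forall {ι : Type*} [Fintype ι] {t : Set ℝ} (ht : Convex ℝ t)
    {w z : ι → ℝ} (hw0 : ∀ i, 0 ≤ w i) (hw1 : ∑ i, w i = 1) (hz : ∀ i, z i ∈ t) :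
    ∑ i, w i * z i ∈ t := by
  simpa only [smul_eq_mul] using ht.sum_mem (fun i _ => hw0 i) hw1 fun i _ => hz i

theorem Convex.setOf_forall_apply_mem {ι : Type*} {s : Set ℝ} (hs : Convex ℝ s) :
    Convex ℝ {x : ι → ℝ | ∀ i, x i ∈ s} :=
  fun _ hx _ hy _ _ ha hb hab i => hs (hx i) (hy i) ha hb hab

/-- With `(f, g) = (φ', (φ')⁻¹)` this is `μ_φ`, and with `(f, g) = ((φ')⁻¹, φ')` it is `μ_{φ⋆}`. -/
def quasiMean {ι : Type*} [Fintype ι] (f g : ℝ → ℝ) (w : ι → ℝ) (x : ι → ℝ) : ℝ :=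
  g (∑ i, w i * f (x i))

structure MonotoneInvOn (f g : ℝ → ℝ) (s t : Set ℝ) : Prop where
  mapsTo : MapsTo f s t
  mapsTo_symm : MapsTo g t s
  invOn : InvOn g f s t
  monotoneOn : MonotoneOn f s
  monotoneOn_symm : MonotoneOn g t

namespace MonotoneInvOn

variable {ι ι' : Type*} [Fintype ι] [Fintype ι'] {f g : ℝ → ℝ} {s t : Set ℝ} {κ : ι → ℝ}

theorem of_strictMonoOn (hf : StrictMonoOn f s) (hinv : InvOn g f s t) (hfst : MapsTo f s t)
    (hgts : MapsTo g t s) : MonotoneInvOn f g s t where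
  mapsTo := hfst
  mapsTo_symm := hgts
  invOn := hinv
  monotoneOn := hf.monotoneOn
  monotoneOn_symm _ hu _ hv huv :=
    (hf.le_iff_le (hgts hu) (hgts hv)).1 (by rwa [hinv.2 hu, hinv.2 hv])

theorem symm (h : MonotoneInvOn f g s t) : MonotoneInvOn g f t s :=
  ⟨h.mapsTo_symm, h.mapsTo, h.invOn.symm, h.monotoneOn_symm, h.monotoneOn⟩

theorem le_iff_le (h : MonotoneInvOn f g s t) {u v : ℝ} (hu : u ∈ s) (hv : v ∈ t) :
    f u ≤ v ↔ u ≤ g v :=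
  ⟨fun huv => h.invOn.1 hu ▸ h.monotoneOn_symm (h.mapsTo hu) hv huv,
    fun huv => h.invOn.2 hv ▸ h.monotoneOn hu (h.mapsTo_symm hv) huv⟩

theorem continuousOn (h : MonotoneInvOn f g s t) (hs : IsOpen s) (ht : IsOpen t) :
    ContinuousOn f s := fun x hx => by
  refine (continuousAt_of_monotoneOn_of_image_mem_nhds h.monotoneOn (hs.mem_nhds hx) ?_)
    |>.continuousWithinAt
  rw [(h.invOn.bijOn h.mapsTo h.mapsTo_symm).image_eq]
  exact ht.mem_nhds (h.mapsTo hx)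

theorem continuousOn_quasiMean (h : MonotoneInvOn f g s t) (hs : IsOpen s) (ht : IsOpen t)
    (htc : Convex ℝ t) {w : ι → ℝ} (hw0 : ∀ i, 0 ≤ w i) (hw1 : ∑ i, w i = 1) :
    ContinuousOn (quasiMean f g w) {x : ι → ℝ | ∀ i, x i ∈ s} := by
  refine (h.symm.continuousOn ht hs).comp (continuousOn_finsetSum _ fun i _ =>
    continuousOn_const.mul ((h.continuousOn hs ht).comp (continuous_apply i).continuousOn
      fun x hx => hx i)) fun x hx => ?_
  exact htc.sum_mul_mem_of_forall hw0 hw1 fun i => h.mapsTo (hx i)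

theorem jensenConcaveOn_quasiMean_iff (h : MonotoneInvOn f g s t) (hs : Convex ℝ s)
    (ht : Convex ℝ t) {w : ι' → ℝ} (hκ0 : ∀ i, 0 ≤ κ i) (hκ1 : ∑ i, κ i = 1)
    (hw0 : ∀ j, 0 ≤ w j) (hw1 : ∑ j, w j = 1) :
    JensenConcaveOn w {x : ι → ℝ | ∀ i, x i ∈ s} (quasiMean f g κ) ↔
      JensenConvexOn κ {y : ι' → ℝ | ∀ j, y j ∈ t} (quasiMean g f w) := by
  have key : ∀ x : ι' → ι → ℝ, (∀ j i, x j i ∈ s) →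
      (∑ j, w j • quasiMean f g κ (x j) ≤ quasiMean f g κ (∑ j, w j • x j) ↔
        quasiMean g f w (∑ i, κ i • fun j => f (x j i)) ≤
          ∑ i, κ i • quasiMean g f w fun j => f (x j i)) := by
    intro x hx
    have hgf : ∀ i, ∑ j, w j * g (f (x j i)) = ∑ j, w j * x j i := fun i =>
      Finset.sum_congr rfl fun j _ => by rw [h.invOn.1 (hx j i)]
    simp only [quasiMean, Finset.sum_apply, Pi.smul_apply, smul_eq_mul, hgf]
    refine (h.le_iff_le ?_ ?_).symm
    · exact hs.sum_mul_mem_of_forall hw0 hw1 fun j =>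
        h.mapsTo_symm (ht.sum_mul_mem_of_forall hκ0 hκ1 fun i => h.mapsTo (hx j i))
    · exact ht.sum_mul_mem_of_forall hκ0 hκ1 fun i =>
        h.mapsTo (hs.sum_mul_mem_of_forall hw0 hw1 fun j => hx j i)
  refine ⟨fun H z hz => ?_, fun H x hx => (key x hx).2 (H _ fun i j => h.mapsTo (hx j i))⟩
  have hfg : ∀ i, (fun j => f (g (z i j))) = z i := fun i => funext fun j => h.invOn.2 (hz i j)
  simpa only [hfg] using (key (fun j i => g (z i j)) fun j i => h.mapsTo_symm (hz i j)).1
    (H _ fun j i => h.mapsTo_symm (hz i j))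

theorem concaveOn_quasiMean_iff (h : MonotoneInvOn f g s t) (hs : Convex ℝ s) (ht : Convex ℝ t)
    (hκ0 : ∀ i, 0 ≤ κ i) (hκ1 : ∑ i, κ i = 1) :
    ConcaveOn ℝ {x : ι → ℝ | ∀ i, x i ∈ s} (quasiMean f g κ) ↔
      ∀ a ∈ Icc (0 : ℝ) 1,
        JensenConvexOn κ {y : Fin 2 → ℝ | ∀ j, y j ∈ t} (quasiMean g f ![a, 1 - a]) := by
  rw [concaveOn_iff_forall_jensenConcaveOn hs.setOf_forall_apply_mem]
  exact forall₂_congr fun a ha => h.jensenConcaveOn_quasiMean_iff hs ht hκ0 hκ1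
    (nonneg_vecCons_one_sub ha) (sum_vecCons_one_sub a)

theorem convexOn_quasiMean_iff (h : MonotoneInvOn f g s t) (hs : Convex ℝ s) (ht : Convex ℝ t)
    (hκ0 : ∀ i, 0 ≤ κ i) (hκ1 : ∑ i, κ i = 1) :
    ConvexOn ℝ {y : ι → ℝ | ∀ i, y i ∈ t} (quasiMean g f κ) ↔
      ∀ b ∈ Icc (0 : ℝ) 1,
        JensenConcaveOn κ {x : Fin 2 → ℝ | ∀ j, x j ∈ s} (quasiMean f g ![b, 1 - b]) := by
  rw [convexOn_iff_forall_jensenConvexOn ht.setOf_forall_apply_mem]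
  exact forall₂_congr fun b hb => (h.jensenConcaveOn_quasiMean_iff hs ht
    (nonneg_vecCons_one_sub hb) (sum_vecCons_one_sub b) hκ0 hκ1).symm

theorem forall_convexOn_quasiMean_iff_forall_concaveOn (h : MonotoneInvOn f g s t)
    (hs : Convex ℝ s) (ht : Convex ℝ t) :
    (∀ a ∈ Icc (0 : ℝ) 1,
        ConvexOn ℝ {y : Fin 2 → ℝ | ∀ j, y j ∈ t} (quasiMean g f ![a, 1 - a])) ↔
      ∀ b ∈ Icc (0 : ℝ) 1,
        ConcaveOn ℝ {x : Fin 2 → ℝ | ∀ j, x j ∈ s} (quasiMean f g ![b, 1 - b]) := by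
  simp only [convexOn_iff_forall_jensenConvexOn ht.setOf_forall_apply_mem,
    concaveOn_iff_forall_jensenConcaveOn hs.setOf_forall_apply_mem]
  have hswap : ∀ a ∈ Icc (0 : ℝ) 1, ∀ b ∈ Icc (0 : ℝ) 1,
      JensenConvexOn ![b, 1 - b] {y : Fin 2 → ℝ | ∀ j, y j ∈ t} (quasiMean g f ![a, 1 - a]) ↔
        JensenConcaveOn ![a, 1 - a] {x : Fin 2 → ℝ | ∀ j, x j ∈ s} (quasiMean f g ![b, 1 - b]) :=
    fun a ha b hb => (h.jensenConcaveOn_quasiMean_iff hs ht (nonneg_vecCons_one_sub hb)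
      (sum_vecCons_one_sub b) (nonneg_vecCons_one_sub ha) (sum_vecCons_one_sub a)).symm
  exact ⟨fun H b hb a ha => (hswap a ha b hb).1 (H a ha b hb),
    fun H a ha b hb => (hswap a ha b hb).2 (H b hb a ha)⟩

theorem concaveOn_quasiMean_iff_convexOn_quasiMean (h : MonotoneInvOn f g s t)
    (hso : IsOpen s) (hto : IsOpen t) (hs : Convex ℝ s) (ht : Convex ℝ t) (hκ0 : ∀ i, 0 ≤ κ i)
    (hκ1 : ∑ i, κ i = 1) {i₀ : ι} (hi₀ : 0 < κ i₀) (hi₀' : κ i₀ < 1) :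
    ConcaveOn ℝ {x : ι → ℝ | ∀ i, x i ∈ s} (quasiMean f g κ) ↔
      ConvexOn ℝ {y : ι → ℝ | ∀ i, y i ∈ t} (quasiMean g f κ) := by
  rw [h.concaveOn_quasiMean_iff hs ht hκ0 hκ1, h.convexOn_quasiMean_iff hs ht hκ0 hκ1]
  calc (∀ a ∈ Icc (0 : ℝ) 1,
        JensenConvexOn κ {y : Fin 2 → ℝ | ∀ j, y j ∈ t} (quasiMean g f ![a, 1 - a]))
      ↔ ∀ a ∈ Icc (0 : ℝ) 1,
        ConvexOn ℝ {y : Fin 2 → ℝ | ∀ j, y j ∈ t} (quasiMean g f ![a, 1 - a]) :=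
      forall₂_congr fun a ha => jensenConvexOn_iff_convexOn ht.setOf_forall_apply_mem
        (h.symm.continuousOn_quasiMean hto hso hs (nonneg_vecCons_one_sub ha)
          (sum_vecCons_one_sub a)) hκ0 hκ1 hi₀ hi₀'
    _ ↔ ∀ b ∈ Icc (0 : ℝ) 1,
        ConcaveOn ℝ {x : Fin 2 → ℝ | ∀ j, x j ∈ s} (quasiMean f g ![b, 1 - b]) :=
      h.forall_convexOn_quasiMean_iff_forall_concaveOn hs ht
    _ ↔ ∀ b ∈ Icc (0 : ℝ) 1,
        JensenConcaveOn κ {x : Fin 2 → ℝ | ∀ j, x j ∈ s} (quasiMean f g ![b, 1 - b]) :=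
      forall₂_congr fun b hb => (jensenConcaveOn_iff_concaveOn hs.setOf_forall_apply_mem
        (h.continuousOn_quasiMean hso hto ht (nonneg_vecCons_one_sub hb)
          (sum_vecCons_one_sub b)) hκ0 hκ1 hi₀ hi₀').symm

end MonotoneInvOn

theorem statement_4_general (m : ℕ) (hm : 1 ≤ m)
    (I J : Set ℝ) (hIo : IsOpen I) (hIc : Convex ℝ I) (hJo : IsOpen J) (hJc : Convex ℝ J)
    (φ Dφ ψ : ℝ → ℝ)
    (hconv : StrictConvexOn ℝ I φ)
    (hder : ∀ t ∈ I, HasDerivAt φ (Dφ t) t)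
    (hbij : Set.BijOn Dφ I J)
    (hψmaps : Set.MapsTo ψ J I)
    (hψ1 : ∀ t ∈ I, ψ (Dφ t) = t)
    (hψ2 : ∀ y ∈ J, Dφ (ψ y) = y)
    (κ : Fin m → ℝ) (hκ : ∀ i, 0 < κ i) (hκ1 : (∑ i, κ i) = 1) :
    ConcaveOn ℝ {x : Fin m → ℝ | ∀ i, x i ∈ I} (fun x => ψ (∑ i, κ i * Dφ (x i)))
      ↔ ConvexOn ℝ {y : Fin m → ℝ | ∀ i, y i ∈ J} (fun y => Dφ (∑ i, κ i * ψ (y i))) := by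
  have hDφ : StrictMonoOn Dφ I := (hconv.strictMonoOn_deriv fun t ht =>
    (hder t ht).differentiableAt).congr fun t ht => (hder t ht).deriv
  have h := MonotoneInvOn.of_strictMonoOn hDφ ⟨hψ1, hψ2⟩ hbij.mapsTo hψmaps
  have hκ0 : ∀ i, 0 ≤ κ i := fun i => (hκ i).le
  change ConcaveOn ℝ _ (quasiMean Dφ ψ κ) ↔ ConvexOn ℝ _ (quasiMean ψ Dφ κ)
  obtain rfl | hm2 : m = 1 ∨ 2 ≤ m := by omega
  · have hκ_one : κ 0 = 1 := by simpa using hκ1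
    rw [h.concaveOn_quasiMean_iff hIc hJc hκ0 hκ1, h.convexOn_quasiMean_iff hIc hJc hκ0 hκ1]
    exact iff_of_true (fun _ _ _ _ => by simp [hκ_one]) (fun _ _ _ _ => by simp [hκ_one])
  have hκ_lt_one : κ ⟨0, hm⟩ < 1 := hκ1 ▸ Finset.single_lt_sum (j := ⟨1, hm2⟩) (by simp)
    (Finset.mem_univ _) (Finset.mem_univ _) (hκ _) fun k _ _ => hκ0 k
  exact h.concaveOn_quasiMean_iff_convexOn_quasiMean hIo hJo hIc hJc hκ0 hκ1 (hκ _) hκ_lt_one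

/-- the quasi-arithmetic aggregator `μ_φ = (φ')⁻¹(Σ κᵢ φ'(xᵢ))` is concave on
`I^m` if and only if the dual aggregator `μ_{φ⋆} = φ'(Σ κᵢ (φ')⁻¹(yᵢ))` is convex on `J^m`. -/
theorem statement_4 (m : ℕ) (hm : 1 ≤ m)
    (I J : Set ℝ) (hIo : IsOpen I) (hIc : Convex ℝ I) (hJo : IsOpen J) (hJc : Convex ℝ J)
    (φ Dφ ψ : ℝ → ℝ)
    (hconv : StrictConvexOn ℝ I φ)
    (hder : ∀ t ∈ I, HasDerivAt φ (Dφ t) t)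
    (hDcont : ContinuousOn Dφ I)
    (hbij : Set.BijOn Dφ I J)
    (hψmaps : Set.MapsTo ψ J I)
    (hψ1 : ∀ t ∈ I, ψ (Dφ t) = t)
    (hψ2 : ∀ y ∈ J, Dφ (ψ y) = y)
    (κ : Fin m → ℝ) (hκ : ∀ i, 0 < κ i) (hκ1 : (∑ i, κ i) = 1) :
    ConcaveOn ℝ {x : Fin m → ℝ | ∀ i, x i ∈ I} (fun x => ψ (∑ i, κ i * Dφ (x i)))
      ↔ ConvexOn ℝ {y : Fin m → ℝ | ∀ i, y i ∈ J} (fun y => Dφ (∑ i, κ i * ψ (y i))) :=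
  statement_4_general m hm I J hIo hIc hJo hJc φ Dφ ψ hconv hder hbij hψmaps hψ1 hψ2 κ hκ hκ1
end

section
/- Let x_⋆ be the LDA on (0,∞)^m with generator φ and weights γ_1,…,γ_m > 0, Γ = Σ_i γ_i. If x_⋆ is concave on (0,∞)^m, then x_⋆(x_1,…,x_m) ≤ Σ_{i=1}^m γ_i x_i for all (x_1,…,x_m) ∈ (0,∞)^m. If x_⋆ is convex on (0,∞)^m, then x_⋆(x_1,…,x_m) ≥ Σ_{i=1}^m γ_i x_i for all (x_1,…,x_m) ∈ (0,∞)^m. -/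
/-!
Put `t = Σ γᵢ xᵢ / Γ` and `p = (t, …, t)`. On the diagonal `x⋆(p) = Γ t = Σ γᵢ xᵢ`, and the
derivative of `x⋆` at `p` in the direction `x - p` vanishes: differentiating the implicit relation
`φ'(x⋆/Γ) = Γ⁻¹ Σ γᵢ φ'(xᵢ)` along the segment gives `φ''(t) · (x⋆/Γ)' = Γ⁻¹ φ''(t) Σ γᵢ (xᵢ - t)`,
which is `0`, and `φ''(t) ≠ 0`. A concave function lies below its tangent lines, so
`x⋆(x) ≤ x⋆(p)`, and a convex one above them. Concavity or convexity on the open orthant also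
provides the continuity of `x⋆` at `p` that the implicit differentiation needs.
-/

open Filter Topology Set AffineMap

theorem hasDerivWithinAt_zero_of_comp {F u : ℝ → ℝ} {F' a : ℝ} {s : Set ℝ}
    (hF : HasDerivAt F F' (u a)) (hF' : F' ≠ 0) (hu : ContinuousWithinAt u s a)
    (hFu : HasDerivWithinAt (F ∘ u) 0 s a) : HasDerivWithinAt u 0 s a := by
  have hinv : (fun y => u y - u a) =O[𝓝[s] a] (fun y => F (u y) - F (u a)) :=
    ((hF.isTheta_sub hF').isBigO_symm.comp_tendsto
      (hu.tendsto.prodMk tendsto_const_pure) :)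
  refine .of_isLittleO ?_
  simpa using hinv.trans_isLittleO (by simpa using hFu.isLittleO)

section Segment

variable {E : Type*} [AddCommGroup E] [Module ℝ E] {C : Set E} {f : E → ℝ} {p x : E}

theorem ConcaveOn.le_of_hasDerivWithinAt_lineMap (hf : ConcaveOn ℝ C f) (hp : p ∈ C)
    (hx : x ∈ C) (hd : HasDerivWithinAt (fun s : ℝ => f (lineMap p x s)) 0 (Ioi 0) 0) :
    f x ≤ f p := by
  have := (hf.comp_affineMap (lineMap p x)).slope_le_of_hasDerivWithinAt_Ioi
    (by simpa using hp) (by simpa using hx) one_pos hd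
  simpa [slope_def_field] using this

theorem ConvexOn.le_of_hasDerivWithinAt_lineMap (hf : ConvexOn ℝ C f) (hp : p ∈ C)
    (hx : x ∈ C) (hd : HasDerivWithinAt (fun s : ℝ => f (lineMap p x s)) 0 (Ioi 0) 0) :
    f p ≤ f x := by
  have := (hf.comp_affineMap (lineMap p x)).le_slope_of_hasDerivWithinAt_Ioi
    (by simpa using hp) (by simpa using hx) one_pos hd
  simpa [slope_def_field] using this

end Segment

theorem isOpen_setOf_forall_pos {ι : Type*} [Finite ι] :
    IsOpen {x : ι → ℝ | ∀ i, 0 < x i} := by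
  simpa only [ofPred_forall] using
    isOpen_iInter_of_finite fun i => isOpen_lt continuous_const (continuous_apply i)

-- `f` plays the role of `x⋆` and `Dφ` that of `φ'`.
def IsLDA {ι : Type*} [Fintype ι] (Dφ : ℝ → ℝ) (γ : ι → ℝ) (Γ : ℝ) (f : (ι → ℝ) → ℝ) : Prop :=
  ∀ x : ι → ℝ, (∀ i, 0 < x i) → 0 < f x / Γ ∧ Dφ (f x / Γ) = (1 / Γ) * ∑ i, γ i * Dφ (x i)

namespace IsLDA

variable {ι : Type*} [Fintype ι] {Dφ : ℝ → ℝ} {γ : ι → ℝ} {Γ : ℝ} {f : (ι → ℝ) → ℝ}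

theorem ne_zero (hf : IsLDA Dφ γ Γ f) : Γ ≠ 0 := by
  rintro rfl
  simpa using (hf (fun _ => 1) fun _ => one_pos).1

theorem apply_const (hf : IsLDA Dφ γ Γ f) (hΓ : Γ = ∑ i, γ i)
    (hmono : StrictMonoOn Dφ (Ioi 0)) {t : ℝ} (ht : 0 < t) : f (fun _ => t) = Γ * t := by
  obtain ⟨hpos, heq⟩ := hf _ fun _ => ht
  have hdiv : f (fun _ => t) / Γ = t := by
    refine hmono.injOn hpos ht ?_
    rw [heq, ← Finset.sum_mul, ← hΓ]
    field_simp [hf.ne_zero]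
  rw [mul_comm]
  exact (div_eq_iff hf.ne_zero).1 hdiv

theorem hasDerivWithinAt_lineMap (hf : IsLDA Dφ γ Γ f) (hΓ : Γ = ∑ i, γ i)
    (hmono : StrictMonoOn Dφ (Ioi 0)) {t D : ℝ} (ht : 0 < t) (hD : HasDerivAt Dφ D t)
    (hD0 : D ≠ 0) {x : ι → ℝ} (hx : ∀ i, 0 < x i) (hmean : ∑ i, γ i * x i = Γ * t)
    (hcont : ContinuousAt f (fun _ => t)) :
    HasDerivWithinAt (fun s : ℝ => f (lineMap (fun _ => t) x s)) 0 (Ioi 0) 0 := by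
  set p : ι → ℝ := fun _ => t
  have hseg : ∀ s ∈ Icc (0:ℝ) 1, ∀ i, 0 < lineMap p x s i := by
    intro s hs i
    simpa [lineMap_apply_module] using (convex_Ioi (0:ℝ)).lineMap_mem ht (hx i) hs
  set H : ℝ → ℝ := fun s => (1 / Γ) * ∑ i, γ i * Dφ (lineMap p x s i)
  have hH : HasDerivAt H 0 0 := by
    have hDp : ∀ i, HasDerivAt Dφ D (lineMap p x (0 : ℝ) i) := by simpa [p] using fun _ => hD
    have hline : HasDerivAt (lineMap p x) (x - p) (0 : ℝ) := hasDerivAt_lineMap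
    have hterm : ∀ i, HasDerivAt (fun s : ℝ => Dφ (lineMap p x s i)) (D * (x i - t)) 0 :=
      fun i => (hDp i).comp 0 (hasDerivAt_pi.1 hline i)
    refine ((HasDerivAt.fun_sum fun i _ => (hterm i).const_mul (γ i)).const_mul
      (1 / Γ)).congr_deriv ?_
    have hcentered : ∑ i, γ i * (x i - t) = 0 := by
      simp [mul_sub, Finset.sum_sub_distrib, hmean, ← Finset.sum_mul, ← hΓ]
    simp only [mul_left_comm (γ _) D, ← Finset.mul_sum, hcentered, mul_zero]
  have hu : HasDerivWithinAt (fun s : ℝ => f (lineMap p x s) / Γ) 0 (Ioi 0) 0 := by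
    refine hasDerivWithinAt_zero_of_comp (F := Dφ) ?_ hD0 ?_ ?_
    · simpa [p, hf.apply_const hΓ hmono ht, hf.ne_zero] using hD
    · exact ((hcont.comp_of_eq lineMap_continuous.continuousAt (by simp [p])).div_const
        Γ).continuousWithinAt
    · refine hH.hasDerivWithinAt.congr_of_eventuallyEq ?_ ?_
      · filter_upwards [Ioo_mem_nhdsGT one_pos] with s hs
        exact (hf _ (hseg s (Ioo_subset_Icc_self hs))).2
      · exact (hf _ (hseg 0 (left_mem_Icc.2 zero_le_one))).2
  simpa [mul_div_cancel₀ _ hf.ne_zero] using hu.const_mul Γ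

end IsLDA

theorem statement_5_general (m : ℕ) (Dφ DDφ : ℝ → ℝ)
    (hd2 : ∀ t ∈ Set.Ioi (0:ℝ), HasDerivAt Dφ (DDφ t) t)
    (hpos : ∀ t ∈ Set.Ioi (0:ℝ), 0 < DDφ t)
    (γ : Fin m → ℝ) (hγ : ∀ i, 0 < γ i)
    (Γ : ℝ) (hΓ : Γ = ∑ i, γ i)
    (f : (Fin m → ℝ) → ℝ)
    (hf : ∀ x : Fin m → ℝ, (∀ i, 0 < x i) →
      0 < f x / Γ ∧ Dφ (f x / Γ) = (1 / Γ) * ∑ i, γ i * Dφ (x i)) :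
    (ConcaveOn ℝ {x : Fin m → ℝ | ∀ i, 0 < x i} f →
      ∀ x : Fin m → ℝ, (∀ i, 0 < x i) → f x ≤ ∑ i, γ i * x i)
    ∧ (ConvexOn ℝ {x : Fin m → ℝ | ∀ i, 0 < x i} f →
      ∀ x : Fin m → ℝ, (∀ i, 0 < x i) → (∑ i, γ i * x i) ≤ f x) := by
  have hlda : IsLDA Dφ γ Γ f := hf
  have hmono : StrictMonoOn Dφ (Ioi 0) :=
    strictMonoOn_of_hasDerivWithinAt_pos (convex_Ioi 0)
      (fun t ht => (hd2 t ht).continuousAt.continuousWithinAt)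
      (fun t ht => (hd2 t (interior_subset ht)).hasDerivWithinAt)
      (fun t ht => hpos t (interior_subset ht))
  have hΓpos : 0 < Γ :=
    (hΓ ▸ Finset.sum_nonneg fun i _ => (hγ i).le).lt_of_ne' hlda.ne_zero
  have hm : (Finset.univ : Finset (Fin m)).Nonempty :=
    Finset.nonempty_of_sum_ne_zero (hΓ ▸ hlda.ne_zero)
  have key : ∀ x : Fin m → ℝ, (∀ i, 0 < x i) → ∃ p : Fin m → ℝ, (∀ i, 0 < p i) ∧
      f p = ∑ i, γ i * x i ∧
      (ContinuousAt f p → HasDerivWithinAt (fun s : ℝ => f (lineMap p x s)) 0 (Ioi 0) 0) := by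
    intro x hx
    set t := (∑ i, γ i * x i) / Γ
    have ht : 0 < t := div_pos (Finset.sum_pos (fun i _ => mul_pos (hγ i) (hx i)) hm) hΓpos
    have hmean : ∑ i, γ i * x i = Γ * t := (mul_div_cancel₀ _ hlda.ne_zero).symm
    exact ⟨fun _ => t, fun _ => ht, hmean ▸ hlda.apply_const hΓ hmono ht,
      hlda.hasDerivWithinAt_lineMap hΓ hmono ht (hd2 t ht) (hpos t ht).ne' hx hmean⟩
  have hopen := isOpen_setOf_forall_pos (ι := Fin m)
  refine ⟨fun hcc x hx => ?_, fun hcv x hx => ?_⟩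
  · obtain ⟨p, hp, hfp, hd⟩ := key x hx
    exact hfp ▸ hcc.le_of_hasDerivWithinAt_lineMap hp hx
      (hd ((hcc.continuousOn hopen).continuousAt (hopen.mem_nhds hp)))
  · obtain ⟨p, hp, hfp, hd⟩ := key x hx
    exact hfp ▸ hcv.le_of_hasDerivWithinAt_lineMap hp hx
      (hd ((hcv.continuousOn hopen).continuousAt (hopen.mem_nhds hp)))

/-- if the LDA `x⋆(x) = Γ·(φ')⁻¹((1/Γ)·Σ γᵢ φ'(xᵢ))` is concave on `(0,∞)^m`
then it is bounded above by `Σ γᵢ xᵢ`; if it is convex, it is bounded below by `Σ γᵢ xᵢ`.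
The LDA is encoded by its defining property: `x⋆(x)/Γ > 0` and
`φ'(x⋆(x)/Γ) = (1/Γ)·Σ γᵢ φ'(xᵢ)`. -/
theorem statement_5 (m : ℕ) (φ Dφ DDφ : ℝ → ℝ)
    (hconv : StrictConvexOn ℝ (Set.Ioi 0) φ)
    (hd1 : ∀ t ∈ Set.Ioi (0:ℝ), HasDerivAt φ (Dφ t) t)
    (hd2 : ∀ t ∈ Set.Ioi (0:ℝ), HasDerivAt Dφ (DDφ t) t)
    (hc2 : ContinuousOn DDφ (Set.Ioi 0))
    (hpos : ∀ t ∈ Set.Ioi (0:ℝ), 0 < DDφ t)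
    (γ : Fin m → ℝ) (hγ : ∀ i, 0 < γ i)
    (Γ : ℝ) (hΓ : Γ = ∑ i, γ i)
    (f : (Fin m → ℝ) → ℝ)
    (hf : ∀ x : Fin m → ℝ, (∀ i, 0 < x i) →
      0 < f x / Γ ∧ Dφ (f x / Γ) = (1 / Γ) * ∑ i, γ i * Dφ (x i)) :
    (ConcaveOn ℝ {x : Fin m → ℝ | ∀ i, 0 < x i} f →
      ∀ x : Fin m → ℝ, (∀ i, 0 < x i) → f x ≤ ∑ i, γ i * x i)
    ∧ (ConvexOn ℝ {x : Fin m → ℝ | ∀ i, 0 < x i} f →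
      ∀ x : Fin m → ℝ, (∀ i, 0 < x i) → (∑ i, γ i * x i) ≤ f x) :=
  statement_5_general m Dφ DDφ hd2 hpos γ hγ Γ hΓ f hf
end

section
/- Let σ ∈ ℝ with σ ∉ {0, 1/2, 1}, let β_1,…,β_m > 0 with B = Σ_i β_i, let a ∈ ℝ∖{0} be any constant such that a·(2 − 1/σ)·(1 − 1/σ) > 0 (so that φ(x) = a·x^{2−1/σ} is strictly convex on (0,∞)), and set γ_i = β_i·B^{1/(σ−1)} for each i, Γ = Σ_i γ_i. Then for all (x_1,…,x_m) ∈ (0,∞)^m, the LDA with generator φ and weights γ_1,…,γ_m equals the CES aggregator: Γ·(φ')^{-1}((1/Γ)·Σ_i γ_i φ'(x_i)) = (Σ_{i=1}^m β_i x_i^{(σ−1)/σ})^{σ/(σ−1)}. -/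
/-!
With `e = (σ - 1) / σ`, `φ'(t)` is a constant multiple of `t ^ e`, so `(φ')⁻¹` applied to the
`γ`-mean of the `φ'(xᵢ)` is the `γ`-weighted power mean `(Σ γᵢ xᵢ ^ e / Γ) ^ (1 / e)`. As `γ` is
proportional to `β`, this is `(S / B) ^ (1 / e)` with `S = Σ βᵢ xᵢ ^ e`, and the choice of the
constant makes `Γ = B ^ (1 / e)`, so `Γ · (S / B) ^ (1 / e) = S ^ (1 / e)`.
-/

open Real Finset Set

/-- `ψ` plays the role of `(φ')⁻¹` for `φ'(t) = c * t ^ e`. -/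
lemma apply_weightedMean_mul_rpow_eq_powerMean {ι : Type*} (s : Finset ι) (hs : s.Nonempty)
    (γ x : ι → ℝ) (hγ : ∀ i ∈ s, 0 < γ i) (hx : ∀ i ∈ s, 0 < x i)
    (c e : ℝ) (he : e ≠ 0) (ψ : ℝ → ℝ) (hψ : ∀ t ∈ Ioi (0 : ℝ), ψ (c * t ^ e) = t) :
    ψ ((1 / ∑ i ∈ s, γ i) * ∑ i ∈ s, γ i * (c * x i ^ e))
      = ((∑ i ∈ s, γ i * x i ^ e) / ∑ i ∈ s, γ i) ^ e⁻¹ := by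
  set M := (∑ i ∈ s, γ i * x i ^ e) / ∑ i ∈ s, γ i
  have hM : 0 < M := div_pos
    (sum_pos (fun i hi => mul_pos (hγ i hi) (rpow_pos_of_pos (hx i hi) e)) hs)
    (sum_pos hγ hs)
  have harg : (1 / ∑ i ∈ s, γ i) * ∑ i ∈ s, γ i * (c * x i ^ e) = c * (M ^ e⁻¹) ^ e := by
    rw [rpow_inv_rpow hM.le he, one_div_mul_eq_div]
    simp only [M, mul_left_comm _ c, ← mul_sum, mul_div_assoc]
  rw [harg, hψ _ (rpow_pos_of_pos hM _)]

lemma sum_mul_const_div_sum_mul_const {ι : Type*} (s : Finset ι) (β f : ι → ℝ) {k : ℝ}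
    (hk : k ≠ 0) :
    (∑ i ∈ s, β i * k * f i) / ∑ i ∈ s, β i * k = (∑ i ∈ s, β i * f i) / ∑ i ∈ s, β i := by
  simp only [mul_right_comm _ k, ← sum_mul, mul_div_mul_right _ _ hk]

lemma mul_rpow_one_div_sub_one {B σ : ℝ} (hB : 0 ≤ B) (hσ0 : σ ≠ 0) (hσ1 : σ ≠ 1) :
    B * B ^ (1 / (σ - 1)) = B ^ (σ / (σ - 1)) := by
  have hσ1' : σ - 1 ≠ 0 := sub_ne_zero.mpr hσ1
  have hexp : 1 + 1 / (σ - 1) = σ / (σ - 1) := by field_simp; ring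
  rw [← rpow_one_add' hB (hexp ▸ div_ne_zero hσ0 hσ1'), hexp]

theorem statement_7_general (m : ℕ) (σ a : ℝ) (hσ0 : σ ≠ 0) (hσ1 : σ ≠ 1)
    (β : Fin m → ℝ) (hβ : ∀ i, 0 < β i)
    (B : ℝ) (hB : B = ∑ i, β i)
    (γ : Fin m → ℝ) (hγ : ∀ i, γ i = β i * B ^ (1 / (σ - 1)))
    (Γ : ℝ) (hΓ : Γ = ∑ i, γ i)
    (ψ : ℝ → ℝ)
    (hψ : ∀ t ∈ Set.Ioi (0:ℝ), ψ (a * (2 - 1 / σ) * t ^ (1 - 1 / σ)) = t)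
    (x : Fin m → ℝ) (hx : ∀ i, 0 < x i) :
    Γ * ψ ((1 / Γ) * ∑ i, γ i * (a * (2 - 1 / σ) * (x i) ^ (1 - 1 / σ)))
      = (∑ i, β i * (x i) ^ ((σ - 1) / σ)) ^ (σ / (σ - 1)) := by
  rcases isEmpty_or_nonempty (Fin m) with hm | hm
  · simp [hΓ, zero_rpow (div_ne_zero hσ0 (sub_ne_zero.mpr hσ1))]
  have he : 1 - 1 / σ = (σ - 1) / σ := by field_simp
  have hBpos : 0 < B := hB ▸ sum_pos (fun i _ => hβ i) univ_nonempty
  have hk : 0 < B ^ (1 / (σ - 1)) := rpow_pos_of_pos hBpos _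
  obtain rfl : γ = fun i => β i * B ^ (1 / (σ - 1)) := funext hγ
  have hΓB : Γ = B ^ (σ / (σ - 1)) := by
    rw [hΓ, ← sum_mul, ← hB, mul_rpow_one_div_sub_one hBpos.le hσ0 hσ1]
  have hS : 0 ≤ ∑ i, β i * x i ^ ((σ - 1) / σ) :=
    sum_nonneg fun i _ => mul_nonneg (hβ i).le (rpow_nonneg (hx i).le _)
  rw [hΓ, apply_weightedMean_mul_rpow_eq_powerMean univ univ_nonempty _ x
      (fun i _ => mul_pos (hβ i) hk) (fun i _ => hx i) _ _
      (he ▸ div_ne_zero (sub_ne_zero.mpr hσ1) hσ0) ψ hψ]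
  beta_reduce
  rw [sum_mul_const_div_sum_mul_const _ _ _ hk.ne', ← hB, ← hΓ, hΓB, he, inv_div,
    ← mul_rpow hBpos.le (div_nonneg hS hBpos.le), mul_div_cancel₀ _ hBpos.ne']

/-- Lemma 1 of the paper: the CES aggregator
`(Σ βᵢ xᵢ^((σ−1)/σ))^(σ/(σ−1))` is the LDA with generator `φ(x) = a·x^(2−1/σ)` and
weights `γᵢ = βᵢ·B^(1/(σ−1))`. Here `ψ` is any left inverse of `φ'` on `(0,∞)`, and
`φ'(t) = a·(2−1/σ)·t^(1−1/σ)`. -/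
theorem statement_7 (m : ℕ) (σ a : ℝ) (hσ0 : σ ≠ 0) (hσh : σ ≠ 1 / 2) (hσ1 : σ ≠ 1)
    (ha : a ≠ 0) (hstrict : 0 < a * (2 - 1 / σ) * (1 - 1 / σ))
    (β : Fin m → ℝ) (hβ : ∀ i, 0 < β i)
    (B : ℝ) (hB : B = ∑ i, β i)
    (γ : Fin m → ℝ) (hγ : ∀ i, γ i = β i * B ^ (1 / (σ - 1)))
    (Γ : ℝ) (hΓ : Γ = ∑ i, γ i)
    (ψ : ℝ → ℝ)
    (hψ : ∀ t ∈ Set.Ioi (0:ℝ), ψ (a * (2 - 1 / σ) * t ^ (1 - 1 / σ)) = t)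
    (hder : ∀ t ∈ Set.Ioi (0:ℝ), HasDerivAt (fun s : ℝ => a * s ^ (2 - 1 / σ))
      (a * (2 - 1 / σ) * t ^ (1 - 1 / σ)) t)
    (x : Fin m → ℝ) (hx : ∀ i, 0 < x i) :
    Γ * ψ ((1 / Γ) * ∑ i, γ i * (a * (2 - 1 / σ) * (x i) ^ (1 - 1 / σ)))
      = (∑ i, β i * (x i) ^ ((σ - 1) / σ)) ^ (σ / (σ - 1)) :=
  statement_7_general m σ a hσ0 hσ1 β hβ B hB γ hγ Γ hΓ ψ hψ x hx
end

section
/- Let σ ∈ ℝ with σ ∉ {1, 2}, let β_1,…,β_m > 0, set δ_i = β_i^σ and Δ = Σ_i δ_i, let b ∈ ℝ∖{0} be any constant such that b·(2−σ)·(1−σ) > 0 (so that φ_p(x) = b·x^{2−σ} is strictly convex on (0,∞)), and set γ_i = δ_i·Δ^{σ/(1−σ)} for each i, Γ = Σ_i γ_i. Then for all (p_1,…,p_m) ∈ (0,∞)^m, the LDA with generator φ_p and weights γ_1,…,γ_m equals the price index: Γ·(φ_p')^{-1}((1/Γ)·Σ_i γ_i φ_p'(p_i)) = (Σ_{i=1}^m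 β_i^σ p_i^{1−σ})^{1/(1−σ)}. -/
/-!
Rescaling all weights by the common factor `Δ^(σ/(1-σ))` does not change the weighted mean, so
the argument of `ψ` is `b(2-σ) t^(1-σ)`, where `t` is the `δ`-weighted power mean of the `pᵢ`
with exponent `1-σ`; hence `ψ` returns `t`. Since `Γ = Δ^(1/(1-σ))`, the product `Γ t` is
`(Σ δᵢ pᵢ^(1-σ))^(1/(1-σ))`.
-/

open Finset Real

section PowerGenerator

variable {ι : Type*} [Fintype ι]

lemma rpow_one_div_one_sub_eq_mul_rpow {Δ : ℝ} (hΔ : 0 < Δ) {σ : ℝ} (hσ : σ ≠ 1) :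
    Δ ^ (1 / (1 - σ)) = Δ * Δ ^ (σ / (1 - σ)) := by
  have hr : 1 - σ ≠ 0 := sub_ne_zero.mpr hσ.symm
  rw [← rpow_one_add' hΔ.le (by field_simp; simpa using hr)]
  congr 1
  field_simp
  ring

lemma weighted_mean_mul_const_weights (w f : ι → ℝ) {k : ℝ} (hk : k ≠ 0) :
    (1 / ∑ i, w i * k) * ∑ i, w i * k * f i = (1 / ∑ i, w i) * ∑ i, w i * f i := by
  simp_rw [← sum_mul, mul_right_comm _ k, ← sum_mul]
  field_simp

lemma leftInverse_weighted_mean_const_mul_rpow [Nonempty ι] {c r : ℝ} (hr : r ≠ 0)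
    {ψ : ℝ → ℝ} (hψ : ∀ t ∈ Set.Ioi (0 : ℝ), ψ (c * t ^ r) = t)
    {w p : ι → ℝ} (hw : ∀ i, 0 < w i) (hp : ∀ i, 0 < p i) :
    ψ ((1 / ∑ i, w i) * ∑ i, w i * (c * p i ^ r))
      = ((∑ i, w i * p i ^ r) / ∑ i, w i) ^ (1 / r) := by
  have hmean_pos : 0 < (∑ i, w i * p i ^ r) / ∑ i, w i :=
    div_pos (sum_pos (fun i _ => mul_pos (hw i) (rpow_pos_of_pos (hp i) r)) univ_nonempty)
      (sum_pos (fun i _ => hw i) univ_nonempty)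
  convert hψ _ (rpow_pos_of_pos hmean_pos (1 / r)) using 2
  rw [one_div r, rpow_inv_rpow hmean_pos.le hr]
  simp_rw [mul_left_comm (w _) c, ← mul_sum]
  ring

end PowerGenerator

theorem statement_8_general (m : ℕ) (σ b : ℝ) (hσ1 : σ ≠ 1)
    (β : Fin m → ℝ) (hβ : ∀ i, 0 < β i)
    (δ : Fin m → ℝ) (hδ : ∀ i, δ i = (β i) ^ σ)
    (Δ : ℝ) (hΔ : Δ = ∑ i, δ i)
    (γ : Fin m → ℝ) (hγ : ∀ i, γ i = δ i * Δ ^ (σ / (1 - σ)))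
    (Γ : ℝ) (hΓ : Γ = ∑ i, γ i)
    (ψ : ℝ → ℝ)
    (hψ : ∀ t ∈ Set.Ioi (0:ℝ), ψ (b * (2 - σ) * t ^ (1 - σ)) = t)
    (p : Fin m → ℝ) (hp : ∀ i, 0 < p i) :
    Γ * ψ ((1 / Γ) * ∑ i, γ i * (b * (2 - σ) * (p i) ^ (1 - σ)))
      = (∑ i, (β i) ^ σ * (p i) ^ (1 - σ)) ^ (1 / (1 - σ)) := by
  have hr : 1 - σ ≠ 0 := sub_ne_zero.mpr hσ1.symm
  rcases isEmpty_or_nonempty (Fin m) with hm | hm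
  · simp [hΓ, zero_rpow (inv_ne_zero hr)]
  have hδ_pos : ∀ i, 0 < δ i := fun i => hδ i ▸ rpow_pos_of_pos (hβ i) σ
  have hΔ_pos : 0 < Δ := hΔ ▸ sum_pos (fun i _ => hδ_pos i) univ_nonempty
  have hγ_eq : γ = fun i => δ i * Δ ^ (σ / (1 - σ)) := funext hγ
  have hΓ_eq : Γ = Δ ^ (1 / (1 - σ)) := by
    rw [hΓ, hγ_eq, ← sum_mul, ← hΔ, rpow_one_div_one_sub_eq_mul_rpow hΔ_pos hσ1]
  have hS_pos : 0 < ∑ i, δ i * p i ^ (1 - σ) :=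
    sum_pos (fun i _ => mul_pos (hδ_pos i) (rpow_pos_of_pos (hp i) _)) univ_nonempty
  rw [hΓ, hγ_eq, weighted_mean_mul_const_weights _ _ (rpow_pos_of_pos hΔ_pos _).ne',
    leftInverse_weighted_mean_const_mul_rpow hr hψ hδ_pos hp, ← hΔ, ← hγ_eq, ← hΓ, hΓ_eq,
    ← mul_rpow hΔ_pos.le (div_pos hS_pos hΔ_pos).le, mul_div_cancel₀ _ hΔ_pos.ne']
  simp only [hδ]

/-- Lemma 2 of the paper: the price index `(Σ βᵢ^σ pᵢ^(1−σ))^(1/(1−σ))` is the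
LDA with generator `φ_p(x) = b·x^(2−σ)` and weights `γᵢ = δᵢ·Δ^(σ/(1−σ))`, `δᵢ = βᵢ^σ`.
Here `ψ` is any left inverse of `φ_p'` on `(0,∞)`, and `φ_p'(t) = b·(2−σ)·t^(1−σ)`. -/
theorem statement_8 (m : ℕ) (σ b : ℝ) (hσ1 : σ ≠ 1) (hσ2 : σ ≠ 2)
    (hb : b ≠ 0) (hstrict : 0 < b * (2 - σ) * (1 - σ))
    (β : Fin m → ℝ) (hβ : ∀ i, 0 < β i)
    (δ : Fin m → ℝ) (hδ : ∀ i, δ i = (β i) ^ σ)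
    (Δ : ℝ) (hΔ : Δ = ∑ i, δ i)
    (γ : Fin m → ℝ) (hγ : ∀ i, γ i = δ i * Δ ^ (σ / (1 - σ)))
    (Γ : ℝ) (hΓ : Γ = ∑ i, γ i)
    (ψ : ℝ → ℝ)
    (hψ : ∀ t ∈ Set.Ioi (0:ℝ), ψ (b * (2 - σ) * t ^ (1 - σ)) = t)
    (hder : ∀ t ∈ Set.Ioi (0:ℝ), HasDerivAt (fun s : ℝ => b * s ^ (2 - σ))
      (b * (2 - σ) * t ^ (1 - σ)) t)
    (p : Fin m → ℝ) (hp : ∀ i, 0 < p i) :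
    Γ * ψ ((1 / Γ) * ∑ i, γ i * (b * (2 - σ) * (p i) ^ (1 - σ)))
      = (∑ i, (β i) ^ σ * (p i) ^ (1 - σ)) ^ (1 / (1 - σ)) :=
  statement_8_general m σ b hσ1 β hβ δ hδ Δ hΔ γ hγ Γ hΓ ψ hψ p hp
end

section
/- Let m ≥ 2 and let x_⋆ be the LDA on (0,∞)^m with generator φ and weights γ_1,…,γ_m > 0, where x_⋆ takes only positive values. Suppose there exist functions z_1,…,z_m : (0,∞)^m → (0,∞) and Z : (0,∞)^m → (0,∞) such that for all x ∈ (0,∞)^m: z_i(x) = Z(x)·(∂x_⋆/∂x_i)(x) for every i (the dual-quantity condition), and Σ_{i=1}^m x_i·z_i(x) = x_⋆(x)·Z(x) (the duality identity). Then there exist c > 0 and κ ∈ ℝ such that φ''(t) = c·t^κ for all t > 0; consequently x_⋆ is a CES aggregator when κ ≠ −1, and the Cobb–Douglas limit of CES when κ = −1. -/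
/-!
Differentiating `φ'(x⋆/Γ) = Γ⁻¹ ∑ γᵢ φ'(xᵢ)` gives `∂ᵢx⋆ = γᵢ φ''(xᵢ) / φ''(x⋆/Γ)`, so the duality
identity turns into `∑ γᵢ g(xᵢ) = Γ g(x⋆/Γ)` for `g(t) = t φ''(t)`. On points `x` taking only two
values this says that `g ∘ (φ')⁻¹` commutes with the weighted mean `λu + (1 - λ)v`, `λ = γᵢ/Γ`.
A continuous function with this property is affine (its zero set has no gaps), so
`t φ''(t) = a φ'(t) + b`, and this Euler equation forces `φ''(t) = φ''(1) t^(a-1)`.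
-/

open Set Topology

theorem eqOn_zero_of_exists_zero_between {h : ℝ → ℝ} {p q : ℝ}
    (hh : ContinuousOn h (Icc p q)) (hp : h p = 0) (hq : h q = 0)
    (hbetween : ∀ a ∈ Icc p q, ∀ b ∈ Icc p q, a < b → h a = 0 → h b = 0 →
      ∃ w ∈ Ioo a b, h w = 0) :
    EqOn h 0 (Icc p q) := by
  intro r hr
  by_contra hr0
  have hpr : Icc p r ⊆ Icc p q := Icc_subset_Icc_right hr.2
  have hrq : Icc r q ⊆ Icc p q := Icc_subset_Icc_left hr.1
  set A := Icc p r ∩ h ⁻¹' {0}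
  set B := Icc r q ∩ h ⁻¹' {0}
  have hAbdd : BddAbove A := ⟨r, fun u hu => hu.1.2⟩
  have hBbdd : BddBelow B := ⟨r, fun u hu => hu.1.1⟩
  have hA : sSup A ∈ A :=
    ((hh.mono hpr).preimage_isClosed_of_isClosed isClosed_Icc isClosed_singleton).csSup_mem
      ⟨p, ⟨le_rfl, hr.1⟩, hp⟩ hAbdd
  have hB : sInf B ∈ B :=
    ((hh.mono hrq).preimage_isClosed_of_isClosed isClosed_Icc isClosed_singleton).csInf_mem
      ⟨q, ⟨hr.2, le_rfl⟩, hq⟩ hBbdd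
  have hAB : sSup A < sInf B := lt_of_le_of_ne (hA.1.2.trans hB.1.1) fun hAB =>
    hr0 (le_antisymm hA.1.2 (hAB ▸ hB.1.1) ▸ hA.2)
  obtain ⟨w, ⟨hAw, hwB⟩, hw⟩ := hbetween _ (hpr hA.1) _ (hrq hB.1) hAB hA.2 hB.2
  rcases le_or_gt w r with hwr | hrw
  · exact hAw.not_ge (le_csSup hAbdd ⟨⟨hA.1.1.trans hAw.le, hwr⟩, hw⟩)
  · exact hwB.not_ge (csInf_le hBbdd ⟨⟨hrw.le, hwB.le.trans hB.1.2⟩, hw⟩)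

/-- `g ∘ D⁻¹` commutes with the `l`-weighted mean of two points of `D '' S`. -/
def IsMeanAffine (l : ℝ) (S : Set ℝ) (D g : ℝ → ℝ) : Prop :=
  ∀ s ∈ S, ∀ t ∈ S, ∃ w ∈ S, D w = l * D s + (1 - l) * D t ∧ g w = l * g s + (1 - l) * g t

namespace IsMeanAffine

variable {l : ℝ} {S : Set ℝ} {D g : ℝ → ℝ}

theorem sub_affine (h : IsMeanAffine l S D g) (a b : ℝ) :
    IsMeanAffine l S D (fun r => g r - (a * D r + b)) := by
  intro s hs t ht
  obtain ⟨w, hw, hwD, hwg⟩ := h s hs t ht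
  exact ⟨w, hw, hwD, by simp only; rw [hwD, hwg]; ring⟩

theorem eqOn_zero (h : IsMeanAffine l S D g) (hl0 : 0 < l) (hl1 : l < 1)
    (hD : StrictMonoOn D S) (hg : ContinuousOn g S) {p q : ℝ} (hpq : Icc p q ⊆ S)
    (hp : g p = 0) (hq : g q = 0) : EqOn g 0 (Icc p q) := by
  refine eqOn_zero_of_exists_zero_between (hg.mono hpq) hp hq fun a ha b hb hab hga hgb => ?_
  obtain ⟨w, hw, hwD, hwg⟩ := h a (hpq ha) b (hpq hb)
  have hDab := hD (hpq ha) (hpq hb) hab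
  refine ⟨w, ⟨(hD.lt_iff_lt (hpq ha) hw).1 ?_, (hD.lt_iff_lt hw (hpq hb)).1 ?_⟩, ?_⟩
  · rw [hwD]; nlinarith
  · rw [hwD]; nlinarith
  · rw [hwg, hga, hgb]; ring

theorem exists_affine_on_Icc (h : IsMeanAffine l S D g) (hl0 : 0 < l) (hl1 : l < 1)
    (hD : StrictMonoOn D S) (hDc : ContinuousOn D S) (hg : ContinuousOn g S) {p q : ℝ}
    (hpq : p < q) (hS : Icc p q ⊆ S) : ∃ a b : ℝ, ∀ r ∈ Icc p q, g r = a * D r + b := by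
  have hDpq : D p < D q := hD (hS (left_mem_Icc.2 hpq.le)) (hS (right_mem_Icc.2 hpq.le)) hpq
  set a := (g q - g p) / (D q - D p)
  refine ⟨a, g p - a * D p, fun r hr => sub_eq_zero.1 ?_⟩
  refine (h.sub_affine a (g p - a * D p)).eqOn_zero hl0 hl1 hD
    (hg.sub ((continuousOn_const.mul hDc).add continuousOn_const)) hS (by ring) ?_ hr
  simp only [a]
  field_simp [(sub_pos.2 hDpq).ne']
  ring

theorem exists_affine (h : IsMeanAffine l S D g) (hl0 : 0 < l) (hl1 : l < 1)
    (hS : S.OrdConnected) (hSnt : S.Nontrivial) (hD : StrictMonoOn D S)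
    (hDc : ContinuousOn D S) (hg : ContinuousOn g S) :
    ∃ a b : ℝ, ∀ r ∈ S, g r = a * D r + b := by
  obtain ⟨s, hs, t, ht, hst⟩ := hSnt.exists_lt
  obtain ⟨a, b, hab⟩ := h.exists_affine_on_Icc hl0 hl1 hD hDc hg hst (hS.out hs ht)
  refine ⟨a, b, fun r hr => ?_⟩
  have hmin : min r s ∈ S := by rcases min_choice r s with e | e <;> rw [e] <;> assumption
  have hmax : max r t ∈ S := by rcases max_choice r t with e | e <;> rw [e] <;> assumption
  have hlt : min r s < max r t := (min_le_right r s).trans_lt (hst.trans_le (le_max_right r t))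
  obtain ⟨α, β, hαβ⟩ := h.exists_affine_on_Icc hl0 hl1 hD hDc hg hlt (hS.out hmin hmax)
  have hs' := hαβ s ⟨min_le_right r s, hst.le.trans (le_max_right r t)⟩
  have ht' := hαβ t ⟨(min_le_right r s).trans hst.le, le_max_right r t⟩
  have hr' := hαβ r ⟨min_le_left r s, le_max_left r t⟩
  rw [hab s (left_mem_Icc.2 hst.le)] at hs'
  rw [hab t (right_mem_Icc.2 hst.le)] at ht'
  have hα : (α - a) * (D t - D s) = 0 := by linear_combination hs' - ht'
  have hαa : α = a :=
    sub_eq_zero.1 ((mul_eq_zero.1 hα).resolve_right (sub_pos.2 (hD hs ht hst)).ne')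
  subst hαa
  rw [hr']
  linarith

end IsMeanAffine

theorem eqOn_mul_rpow_of_mul_eq_affine {F F' : ℝ → ℝ} {a b : ℝ}
    (hF : ∀ t ∈ Ioi (0 : ℝ), HasDerivAt F (F' t) t)
    (hode : ∀ t ∈ Ioi (0 : ℝ), t * F' t = a * F t + b) :
    EqOn F' (fun t => F' 1 * t ^ (a - 1)) (Ioi 0) := by
  set G : ℝ → ℝ := fun u => (a * F u + b) * u ^ (-a)
  have hG : ∀ u ∈ Ioi (0 : ℝ), HasDerivAt G 0 u := by
    intro u hu
    have h := (((hF u hu).const_mul a).add_const b).mul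
      (Real.hasDerivAt_rpow_const (p := -a) (Or.inl hu.ne'))
    refine h.congr_deriv ?_
    rw [← hode u hu, Real.rpow_sub_one hu.ne']
    field_simp [(mem_Ioi.1 hu).ne']
    ring
  intro t ht
  have hconst : G t = G 1 := isOpen_Ioi.is_const_of_deriv_eq_zero (convex_Ioi 0).isPreconnected
    (fun u hu => (hG u hu).differentiableAt.differentiableWithinAt)
    (fun u hu => (hG u hu).deriv) ht (mem_Ioi.2 one_pos)
  simp only [G, ← hode t ht, ← hode 1 (mem_Ioi.2 one_pos), Real.one_rpow, one_mul,
    mul_one] at hconst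
  show F' t = F' 1 * t ^ (a - 1)
  rw [← hconst, mul_assoc _ (t ^ (-a)), ← Real.rpow_add ht, show -a + (a - 1) = -1 by ring,
    Real.rpow_neg_one]
  field_simp [(mem_Ioi.1 ht).ne']

section Aggregator

variable {ι : Type*} [Fintype ι] [DecidableEq ι] {Dφ DDφ : ℝ → ℝ} {γ : ι → ℝ} {Γ : ℝ}
  {f : (ι → ℝ) → ℝ}

theorem fderiv_apply_single_of_implicit {x : ι → ℝ} (hfx : DifferentiableAt ℝ f x)
    (himpl : ∀ᶠ y in 𝓝 x, Dφ (f y / Γ) = (1 / Γ) * ∑ i, γ i * Dφ (y i))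
    (hDφf : HasDerivAt Dφ (DDφ (f x / Γ)) (f x / Γ))
    (hDφx : ∀ i, HasDerivAt Dφ (DDφ (x i)) (x i)) (hΓ : Γ ≠ 0) (hDD : DDφ (f x / Γ) ≠ 0)
    (i : ι) : fderiv ℝ f x (Pi.single i 1) = γ i * DDφ (x i) / DDφ (f x / Γ) := by
  have hL : HasFDerivAt (fun y => Dφ (f y / Γ)) ((DDφ (f x / Γ) * (1 / Γ)) • fderiv ℝ f x) x :=
    (hDφf.comp (f x) ((hasDerivAt_id' (f x)).div_const Γ)).comp_hasFDerivAt x hfx.hasFDerivAt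
  have hRi : ∀ i, HasFDerivAt (fun y : ι → ℝ => γ i * Dφ (y i))
      (γ i • DDφ (x i) • ContinuousLinearMap.proj i) x := fun i =>
    ((hDφx i).comp_hasFDerivAt x (hasFDerivAt_apply (𝕜 := ℝ) i x)).const_mul (γ i)
  have hR := (HasFDerivAt.fun_sum (u := Finset.univ) fun i _ => hRi i).const_mul (1 / Γ)
  have h := congrArg (fun L => L (Pi.single i 1)) (hL.unique (hR.congr_of_eventuallyEq himpl))
  simp only [one_div, smul_apply, smul_eq_mul, sum_apply,
    ContinuousLinearMap.proj_apply, Pi.single_apply, mul_ite, mul_one, mul_zero,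
    Finset.sum_ite_eq', Finset.mem_univ, if_true] at h
  field_simp at h ⊢
  linarith

theorem sum_mul_apply_update_const (γ : ι → ℝ) (G : ℝ → ℝ) (i₀ : ι) (s t : ℝ) :
    ∑ i, γ i * G (Function.update (fun _ => t) i₀ s i)
      = γ i₀ * G s + (∑ i, γ i - γ i₀) * G t := by
  rw [← Finset.add_sum_erase _ _ (Finset.mem_univ i₀),
    ← Finset.sum_erase_eq_sub (Finset.mem_univ i₀), Finset.sum_mul]
  simp only [Function.update_self]
  congr 1
  refine Finset.sum_congr rfl fun i hi => ?_
  rw [Function.update_of_ne (Finset.ne_of_mem_erase hi)]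

theorem differentiableAt_of_duality {x : ι → ℝ} {z : ι → (ι → ℝ) → ℝ} {Z : (ι → ℝ) → ℝ}
    (hfx : f x ≠ 0) (hZx : Z x ≠ 0)
    (hdq : ∀ i, z i x = Z x * fderiv ℝ f x (Pi.single i 1))
    (hdual : ∑ i, x i * z i x = f x * Z x) : DifferentiableAt ℝ f x := by
  by_contra hnd
  -- `fderiv` is junk `0` where `f` is not differentiable, which would make every `z i x` vanish.
  refine mul_ne_zero hfx hZx ?_
  simp [← hdual, hdq, fderiv_zero_of_not_differentiableAt hnd]

theorem sum_mul_mul_eq_of_duality {z : ι → (ι → ℝ) → ℝ} {Z : (ι → ℝ) → ℝ} (hΓ : Γ ≠ 0)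
    (hd2 : ∀ t ∈ Ioi (0:ℝ), HasDerivAt Dφ (DDφ t) t)
    (hpos : ∀ t ∈ Ioi (0:ℝ), 0 < DDφ t)
    (hf : ∀ x : ι → ℝ, (∀ i, 0 < x i) →
      0 < f x / Γ ∧ Dφ (f x / Γ) = (1 / Γ) * ∑ i, γ i * Dφ (x i))
    (hZpos : ∀ x : ι → ℝ, (∀ i, 0 < x i) → 0 < Z x)
    (hdq : ∀ x : ι → ℝ, (∀ i, 0 < x i) →
      ∀ i, z i x = Z x * fderiv ℝ f x (Pi.single i 1))
    (hdual : ∀ x : ι → ℝ, (∀ i, 0 < x i) →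
      (∑ i, x i * z i x) = f x * Z x)
    {x : ι → ℝ} (hx : ∀ i, 0 < x i) :
    ∑ i, γ i * (x i * DDφ (x i)) = f x * DDφ (f x / Γ) := by
  have hfx : 0 < f x / Γ := (hf x hx).1
  have hfx0 : f x ≠ 0 := fun h => by simp [h] at hfx
  have hDD : DDφ (f x / Γ) ≠ 0 := (hpos _ hfx).ne'
  have himpl : ∀ᶠ y in 𝓝 x, Dφ (f y / Γ) = (1 / Γ) * ∑ i, γ i * Dφ (y i) := by
    filter_upwards [Filter.eventually_all.2 fun i =>
      continuousAt_const.eventually_lt (continuous_apply i).continuousAt (hx i)] with y hy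
    exact (hf y hy).2
  have hpart := fderiv_apply_single_of_implicit
    (differentiableAt_of_duality hfx0 (hZpos x hx).ne' (hdq x hx) (hdual x hx)) himpl
    (hd2 _ hfx) (fun i => hd2 _ (hx i)) hΓ hDD
  have hZ := (hZpos x hx).ne'
  apply mul_left_cancel₀ (div_ne_zero hZ hDD)
  calc Z x / DDφ (f x / Γ) * ∑ i, γ i * (x i * DDφ (x i))
      = ∑ i, x i * z i x := by
        rw [Finset.mul_sum]
        exact Finset.sum_congr rfl fun i _ => by rw [hdq x hx i, hpart i]; ring
    _ = f x * Z x := hdual x hx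
    _ = Z x / DDφ (f x / Γ) * (f x * DDφ (f x / Γ)) := by field_simp

theorem isMeanAffine_of_sum_mul_mul_eq (hΓ : Γ = ∑ i, γ i) (hΓ0 : Γ ≠ 0)
    (hf : ∀ x : ι → ℝ, (∀ i, 0 < x i) →
      0 < f x / Γ ∧ Dφ (f x / Γ) = (1 / Γ) * ∑ i, γ i * Dφ (x i))
    (heuler : ∀ x : ι → ℝ, (∀ i, 0 < x i) →
      ∑ i, γ i * (x i * DDφ (x i)) = f x * DDφ (f x / Γ)) (i₀ : ι) :
    IsMeanAffine (γ i₀ / Γ) (Ioi 0) Dφ (fun t => t * DDφ t) := by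
  intro s hs t ht
  set x := Function.update (fun _ => t) i₀ s
  have hx : ∀ i, 0 < x i := by
    intro i
    rcases eq_or_ne i i₀ with rfl | hi
    · simpa [x] using hs
    · simpa [x, hi] using ht
  have hsplit := (sum_mul_apply_update_const γ · i₀ s t)
  rw [← hΓ] at hsplit
  obtain ⟨hw, hD⟩ := hf x hx
  refine ⟨f x / Γ, hw, ?_, ?_⟩
  · rw [hD, hsplit]
    field_simp
  · have h := heuler x hx
    rw [hsplit (fun u => u * DDφ u)] at h
    simp only
    rw [div_mul_eq_mul_div, ← h]
    field_simp

end Aggregator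

theorem statement_12_general (m : ℕ) (hm : 2 ≤ m) (Dφ DDφ : ℝ → ℝ)
    (hd2 : ∀ t ∈ Set.Ioi (0:ℝ), HasDerivAt Dφ (DDφ t) t)
    (hc2 : ContinuousOn DDφ (Set.Ioi 0))
    (hpos : ∀ t ∈ Set.Ioi (0:ℝ), 0 < DDφ t)
    (γ : Fin m → ℝ) (hγ : ∀ i, 0 < γ i)
    (Γ : ℝ) (hΓ : Γ = ∑ i, γ i)
    (f : (Fin m → ℝ) → ℝ)
    (hf : ∀ x : Fin m → ℝ, (∀ i, 0 < x i) →
      0 < f x / Γ ∧ Dφ (f x / Γ) = (1 / Γ) * ∑ i, γ i * Dφ (x i))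
    (z : Fin m → (Fin m → ℝ) → ℝ) (Z : (Fin m → ℝ) → ℝ)
    (hZpos : ∀ x : Fin m → ℝ, (∀ i, 0 < x i) → 0 < Z x)
    (hdq : ∀ x : Fin m → ℝ, (∀ i, 0 < x i) →
      ∀ i, z i x = Z x * fderiv ℝ f x (Pi.single i 1))
    (hdual : ∀ x : Fin m → ℝ, (∀ i, 0 < x i) →
      (∑ i, x i * z i x) = f x * Z x) :
    ∃ c > (0:ℝ), ∃ κ : ℝ, ∀ t ∈ Set.Ioi (0:ℝ), DDφ t = c * t ^ κ := by
  have : Nontrivial (Fin m) := Fin.nontrivial_iff_two_le.2 hm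
  obtain ⟨i₀, j, hj⟩ := exists_pair_ne (Fin m)
  have hΓpos : 0 < Γ := hΓ ▸ Finset.sum_pos (fun i _ => hγ i) Finset.univ_nonempty
  have hl0 : 0 < γ i₀ / Γ := div_pos (hγ i₀) hΓpos
  have hl1 : γ i₀ / Γ < 1 := (div_lt_one hΓpos).2 <| hΓ ▸
    Finset.single_lt_sum hj.symm (Finset.mem_univ _) (Finset.mem_univ _) (hγ j)
      fun k _ _ => (hγ k).le
  have hDc : ContinuousOn Dφ (Ioi 0) := fun t ht => (hd2 t ht).continuousAt.continuousWithinAt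
  have hmono : StrictMonoOn Dφ (Ioi 0) :=
    strictMonoOn_of_hasDerivWithinAt_pos (convex_Ioi 0) hDc
      (by simpa using fun t ht => (hd2 t ht).hasDerivWithinAt) (by simpa using hpos)
  have heuler (x : Fin m → ℝ) (hx : ∀ i, 0 < x i) :=
    sum_mul_mul_eq_of_duality hΓpos.ne' hd2 hpos hf hZpos hdq hdual hx
  obtain ⟨a, b, hab⟩ := (isMeanAffine_of_sum_mul_mul_eq hΓ hΓpos.ne' hf heuler i₀).exists_affine
    hl0 hl1 ordConnected_Ioi (Ioi_infinite 0).nontrivial hmono hDc (continuousOn_id.mul hc2)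
  exact ⟨DDφ 1, hpos 1 (mem_Ioi.2 one_pos), a - 1, eqOn_mul_rpow_of_mul_eq_affine hd2 hab⟩

/-- Theorem 5 of the paper: if the LDA `x⋆` with generator `φ` admits dual
quantities `zᵢ(x) = Z(x)·∂x⋆/∂xᵢ(x)` satisfying the duality identity
`Σ xᵢ·zᵢ(x) = x⋆(x)·Z(x)`, then `φ''(t) = c·t^κ` for some `c > 0` and `κ ∈ ℝ`. -/
theorem statement_12 (m : ℕ) (hm : 2 ≤ m) (φ Dφ DDφ : ℝ → ℝ)
    (hconv : StrictConvexOn ℝ (Set.Ioi 0) φ)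
    (hd1 : ∀ t ∈ Set.Ioi (0:ℝ), HasDerivAt φ (Dφ t) t)
    (hd2 : ∀ t ∈ Set.Ioi (0:ℝ), HasDerivAt Dφ (DDφ t) t)
    (hc2 : ContinuousOn DDφ (Set.Ioi 0))
    (hpos : ∀ t ∈ Set.Ioi (0:ℝ), 0 < DDφ t)
    (γ : Fin m → ℝ) (hγ : ∀ i, 0 < γ i)
    (Γ : ℝ) (hΓ : Γ = ∑ i, γ i)
    (f : (Fin m → ℝ) → ℝ)
    (hf : ∀ x : Fin m → ℝ, (∀ i, 0 < x i) →
      0 < f x / Γ ∧ Dφ (f x / Γ) = (1 / Γ) * ∑ i, γ i * Dφ (x i))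
    (hfpos : ∀ x : Fin m → ℝ, (∀ i, 0 < x i) → 0 < f x)
    (z : Fin m → (Fin m → ℝ) → ℝ) (Z : (Fin m → ℝ) → ℝ)
    (hzpos : ∀ x : Fin m → ℝ, (∀ i, 0 < x i) → ∀ i, 0 < z i x)
    (hZpos : ∀ x : Fin m → ℝ, (∀ i, 0 < x i) → 0 < Z x)
    (hdq : ∀ x : Fin m → ℝ, (∀ i, 0 < x i) →
      ∀ i, z i x = Z x * fderiv ℝ f x (Pi.single i 1))
    (hdual : ∀ x : Fin m → ℝ, (∀ i, 0 < x i) →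
      (∑ i, x i * z i x) = f x * Z x) :
    ∃ c > (0:ℝ), ∃ κ : ℝ, ∀ t ∈ Set.Ioi (0:ℝ), DDφ t = c * t ^ κ :=
  statement_12_general m hm Dφ DDφ hd2 hc2 hpos γ hγ Γ hΓ f hf z Z hZpos hdq hdual
end

section
/- Let x_⋆ be the LDA on (0,∞)^m with generator φ and weights γ_1,…,γ_m > 0. Then for all i, j ∈ {1,…,m} and all x ∈ (0,∞)^m, the marginal rate of substitution of x_i for x_j satisfies S_{ij}(x) = (∂x_⋆/∂x_i)(x) / (∂x_⋆/∂x_j)(x) = (γ_i·φ''(x_i)) / (γ_j·φ''(x_j)); in particular it depends only on x_i and x_j. -/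
/-!
Since `φ'' > 0`, `φ'` is injective on `(0, ∞)` and has an invertible strict derivative at
`x⋆(x) / Γ`, so near `x` the aggregator is `Γ` times a local inverse of `φ'` composed with
`z ↦ Γ⁻¹ ∑ γₖ φ'(zₖ)`. The chain rule gives `∂ᵢ x⋆(x) = γᵢ φ''(xᵢ) / φ''(x⋆(x) / Γ)`, and the
common denominator cancels in the ratio.
-/

open Filter Topology

theorem hasFDerivAt_of_eventually_comp_eq_of_injOn {E : Type*} [NormedAddCommGroup E]
    [NormedSpace ℝ E] {D D' : ℝ → ℝ} {s : Set ℝ} (hs : IsOpen s) (hinj : s.InjOn D)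
    (hD : ∀ t ∈ s, HasDerivAt D (D' t) t) (hD'c : ContinuousOn D' s)
    {F u : E → ℝ} {u' : E →L[ℝ] ℝ} {x : E} (hD'x : D' (F x) ≠ 0)
    (hu : HasFDerivAt u u' x) (hFu : ∀ᶠ z in 𝓝 x, F z ∈ s ∧ D (F z) = u z) :
    HasFDerivAt F ((D' (F x))⁻¹ • u') x := by
  obtain ⟨hxs, hDx⟩ := hFu.self_of_nhds
  have hsd : HasStrictDerivAt D (D' (F x)) (F x) :=
    hasStrictDerivAt_of_hasDerivAt_of_continuousAt ((hs.eventually_mem hxs).mono hD)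
      (hD'c.continuousAt (hs.mem_nhds hxs))
  set g := hsd.localInverse D (D' (F x)) (F x) hD'x
  have hg : HasDerivAt g (D' (F x))⁻¹ (u x) := hDx ▸ (hsd.to_localInverse hD'x).hasDerivAt
  have hgux : g (u x) = F x := hDx ▸ HasStrictFDerivAt.localInverse_apply_image ..
  have hgu : Tendsto (g ∘ u) (𝓝 x) (𝓝 (F x)) :=
    hgux ▸ hg.continuousAt.tendsto.comp hu.continuousAt
  have hF : F =ᶠ[𝓝 x] g ∘ u := by
    filter_upwards [hFu, hu.continuousAt.eventually (hDx ▸ hsd.eventually_right_inverse hD'x),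
      hgu.eventually (hs.mem_nhds hxs)] with z ⟨hzs, hz⟩ hDg hgs
    exact hinj hzs hgs (hz.trans hDg.symm)
  exact (hg.comp_hasFDerivAt x hu).congr_of_eventuallyEq hF

theorem hasFDerivAt_sum_mul_comp {ι : Type*} [Fintype ι] {D D' : ℝ → ℝ} (c : ι → ℝ)
    {x : ι → ℝ} (hD : ∀ k, HasDerivAt D (D' (x k)) (x k)) :
    HasFDerivAt (fun z : ι → ℝ => ∑ k, c k * D (z k))
      (∑ k, (c k * D' (x k)) • (ContinuousLinearMap.proj k : (ι → ℝ) →L[ℝ] ℝ)) x := by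
  refine HasFDerivAt.fun_sum fun k _ => ?_
  simpa only [smul_smul, Function.comp_def, ContinuousLinearMap.proj_apply] using
    ((hD k).comp_hasFDerivAt x
      (ContinuousLinearMap.proj k : (ι → ℝ) →L[ℝ] ℝ).hasFDerivAt).const_mul (c k)

theorem sum_smul_proj_apply_single {ι : Type*} [Fintype ι] [DecidableEq ι] (a : ι → ℝ) (i : ι) :
    (∑ k, a k • ContinuousLinearMap.proj k : (ι → ℝ) →L[ℝ] ℝ) (Pi.single i 1) = a i := by
  simp [Pi.single_apply]

theorem statement_14_general (m : ℕ) (Dφ DDφ : ℝ → ℝ)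
    (hd2 : ∀ t ∈ Set.Ioi (0:ℝ), HasDerivAt Dφ (DDφ t) t)
    (hc2 : ContinuousOn DDφ (Set.Ioi 0))
    (hpos : ∀ t ∈ Set.Ioi (0:ℝ), 0 < DDφ t)
    (γ : Fin m → ℝ)
    (Γ : ℝ)
    (f : (Fin m → ℝ) → ℝ)
    (hf : ∀ x : Fin m → ℝ, (∀ i, 0 < x i) →
      0 < f x / Γ ∧ Dφ (f x / Γ) = (1 / Γ) * ∑ i, γ i * Dφ (x i)) :
    ∀ i j : Fin m, ∀ x : Fin m → ℝ, (∀ k, 0 < x k) →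
      fderiv ℝ f x (Pi.single i 1) / fderiv ℝ f x (Pi.single j 1)
        = (γ i * DDφ (x i)) / (γ j * DDφ (x j)) := by
  intro i j x hx
  obtain ⟨hfx, -⟩ := hf x hx
  -- `f x / 0 = 0` in Lean, so the positivity in `hf` rules out `Γ = 0`.
  have hΓ : Γ ≠ 0 := by rintro rfl; simp at hfx
  have hmono : StrictMonoOn Dφ (Set.Ioi 0) :=
    strictMonoOn_of_hasDerivWithinAt_pos (convex_Ioi 0)
      (fun t ht => (hd2 t ht).continuousAt.continuousWithinAt)
      (fun t ht => (hd2 t (interior_subset ht)).hasDerivWithinAt)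
      (fun t ht => hpos t (interior_subset ht))
  have hx_near : ∀ᶠ z in 𝓝 x, ∀ k, 0 < z k :=
    eventually_all.2 fun k => (continuous_apply k).continuousAt.eventually (lt_mem_nhds (hx k))
  have hF := hasFDerivAt_of_eventually_comp_eq_of_injOn (F := fun z => f z / Γ) isOpen_Ioi
    hmono.injOn hd2 hc2 (hpos _ hfx).ne'
    ((hasFDerivAt_sum_mul_comp γ fun k => hd2 _ (hx k)).const_mul (1 / Γ))
    (hx_near.mono fun z hz => hf z hz)
  have hf' := (hF.const_mul Γ).congr_of_eventuallyEq (f₁ := f) <|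
    .of_forall fun z => (mul_div_cancel₀ (f z) hΓ).symm
  have hpartial : ∀ k, fderiv ℝ f x (Pi.single k 1) = γ k * DDφ (x k) / DDφ (f x / Γ) := by
    intro k
    simp only [hf'.fderiv, smul_apply, sum_smul_proj_apply_single, smul_eq_mul]
    field_simp
  rw [hpartial, hpartial, div_div_div_cancel_right₀ (hpos _ hfx).ne']

/-- for any LDA `x⋆` with generator `φ` and weights `γᵢ`, the marginal rate
of substitution of `xᵢ` for `xⱼ` satisfies
`S_ij(x) = (∂x⋆/∂xᵢ)/(∂x⋆/∂xⱼ) = (γᵢ·φ''(xᵢ))/(γⱼ·φ''(xⱼ))`;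
in particular it depends only on `xᵢ` and `xⱼ`. -/
theorem statement_14 (m : ℕ) (φ Dφ DDφ : ℝ → ℝ)
    (hconv : StrictConvexOn ℝ (Set.Ioi 0) φ)
    (hd1 : ∀ t ∈ Set.Ioi (0:ℝ), HasDerivAt φ (Dφ t) t)
    (hd2 : ∀ t ∈ Set.Ioi (0:ℝ), HasDerivAt Dφ (DDφ t) t)
    (hc2 : ContinuousOn DDφ (Set.Ioi 0))
    (hpos : ∀ t ∈ Set.Ioi (0:ℝ), 0 < DDφ t)
    (γ : Fin m → ℝ) (hγ : ∀ i, 0 < γ i)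
    (Γ : ℝ) (hΓ : Γ = ∑ i, γ i)
    (f : (Fin m → ℝ) → ℝ)
    (hf : ∀ x : Fin m → ℝ, (∀ i, 0 < x i) →
      0 < f x / Γ ∧ Dφ (f x / Γ) = (1 / Γ) * ∑ i, γ i * Dφ (x i)) :
    ∀ i j : Fin m, ∀ x : Fin m → ℝ, (∀ k, 0 < x k) →
      fderiv ℝ f x (Pi.single i 1) / fderiv ℝ f x (Pi.single j 1)
        = (γ i * DDφ (x i)) / (γ j * DDφ (x j)) :=
  statement_14_general m Dφ DDφ hd2 hc2 hpos γ Γ f hf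
end

section
/- Fix m ≥ 1, θ ∈ {−1, +1} and γ_1,…,γ_m > 0, and let the Mitscherlich–Spillman–von Thünen (MST) aggregator be x_⋆(x_1,…,x_m) = Π_{i=1}^m (1 − exp(θ·γ_i·x_i)) on (0,∞)^m. Then the MST aggregator is not an LDA: there exist no strictly convex, twice continuously differentiable φ : (0,∞) → ℝ with φ'' > 0 and no weights γ'_1,…,γ'_m > 0 with Γ' = Σ_i γ'_i such that Γ'·(φ')^{-1}((1/Γ')·Σ_{i=1}^m γ'_i·φ'(x_i)) = Π_{i=1}^m (1 − exp(θ·γ_i·x_i)) for all (x_1,…,x_m) ∈ (0,∞)^m. -/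
open Finset Real

/- On the diagonal `x = (t, …, t)` an LDA is the linear map `t ↦ Γ' t`, so the MST aggregator
would make `P(t) = ∏ (1 - exp (aᵢ t))`, with `aᵢ = θ γᵢ` all of one sign, linear in `t > 0`. Since
`1 - exp (2x) = (1 - exp x)(1 + exp x)` and `P` does not vanish, linearity forces
`∏ (1 + exp (aᵢ t)) = P(2t) / P(t) = 2` for every `t > 0`; but this product is strictly monotone
in `t`. -/

theorem mul_inv_weighted_mean_const {ι : Type*} [Fintype ι] (w : ι → ℝ) (g ψ : ℝ → ℝ) {t : ℝ}
    (ht : ψ (g t) = t) :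
    (∑ i, w i) * ψ ((1 / ∑ i, w i) * ∑ i, w i * g t) = (∑ i, w i) * t := by
  by_cases hw : ∑ i, w i = 0
  · simp [hw]
  · rw [← Finset.sum_mul, one_div, inv_mul_cancel_left₀ hw, ht]

theorem one_sub_exp_two_mul (x : ℝ) : 1 - exp (2 * x) = (1 - exp x) * (1 + exp x) := by
  rw [two_mul, exp_add]
  ring

section

variable {ι : Type*} [Fintype ι] {a : ι → ℝ}

theorem prod_one_add_exp_eq_two_of_linear (ha : ∀ i, a i ≠ 0) {c : ℝ}
    (hc : ∀ t > 0, c * t = ∏ i, (1 - exp (a i * t))) {t : ℝ} (ht : 0 < t) :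
    ∏ i, (1 + exp (a i * t)) = 2 := by
  have hP : ∏ i, (1 - exp (a i * t)) ≠ 0 :=
    prod_ne_zero_iff.mpr fun i _ ↦
      sub_ne_zero.mpr fun h ↦ mul_ne_zero (ha i) ht.ne' (exp_eq_one_iff _ |>.mp h.symm)
  have hdouble : ∏ i, (1 - exp (a i * (2 * t))) =
      (∏ i, (1 - exp (a i * t))) * ∏ i, (1 + exp (a i * t)) := by
    rw [← prod_mul_distrib]
    exact prod_congr rfl fun i _ ↦ by rw [mul_left_comm, one_sub_exp_two_mul]
  apply mul_left_cancel₀ hP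
  rw [← hdouble, ← hc _ (by positivity), ← hc t ht]
  ring

theorem prod_one_add_exp_lt [Nonempty ι] {s t : ℝ} (h : ∀ i, a i * s < a i * t) :
    ∏ i, (1 + exp (a i * s)) < ∏ i, (1 + exp (a i * t)) :=
  prod_lt_prod_of_nonempty (fun i _ ↦ by positivity)
    (fun i _ ↦ by simpa using exp_lt_exp.mpr (h i)) univ_nonempty

theorem not_linear_prod_one_sub_exp (ha : (∀ i, 0 < a i) ∨ ∀ i, a i < 0) (c : ℝ) :
    ¬ ∀ t > 0, c * t = ∏ i, (1 - exp (a i * t)) := by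
  intro hc
  have ha₀ : ∀ i, a i ≠ 0 := by
    rcases ha with ha | ha
    exacts [fun i ↦ (ha i).ne', fun i ↦ (ha i).ne]
  have h₁ := prod_one_add_exp_eq_two_of_linear ha₀ hc one_pos
  have h₂ := prod_one_add_exp_eq_two_of_linear ha₀ hc two_pos
  have : Nonempty ι := by
    by_contra hι
    rw [not_nonempty_iff] at hι
    norm_num at h₁
  rcases ha with ha | ha
  · have := prod_one_add_exp_lt (a := a) (s := 1) (t := 2) fun i ↦ by linarith [ha i]
    linarith
  · have := prod_one_add_exp_lt (a := a) (s := 2) (t := 1) fun i ↦ by linarith [ha i]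
    linarith

end

theorem statement_18_general (m : ℕ) (θ : ℝ) (hθ : θ = -1 ∨ θ = 1)
    (γ : Fin m → ℝ) (hγ : ∀ i, 0 < γ i) :
    ¬ ∃ (φ Dφ DDφ ψ : ℝ → ℝ) (γ' : Fin m → ℝ),
      StrictConvexOn ℝ (Set.Ioi 0) φ ∧
      (∀ t ∈ Set.Ioi (0:ℝ), HasDerivAt φ (Dφ t) t) ∧
      (∀ t ∈ Set.Ioi (0:ℝ), HasDerivAt Dφ (DDφ t) t) ∧
      ContinuousOn DDφ (Set.Ioi 0) ∧
      (∀ t ∈ Set.Ioi (0:ℝ), 0 < DDφ t) ∧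
      (∀ t ∈ Set.Ioi (0:ℝ), ψ (Dφ t) = t) ∧
      (∀ i, 0 < γ' i) ∧
      (∀ x : Fin m → ℝ, (∀ i, 0 < x i) →
        (∑ i, γ' i) * ψ ((1 / ∑ i, γ' i) * ∑ i, γ' i * Dφ (x i))
          = ∏ i, (1 - Real.exp (θ * γ i * x i))) := by
  rintro ⟨φ, Dφ, DDφ, ψ, γ', -, -, -, -, -, hψ, -, heq⟩
  have hsign : (∀ i, 0 < θ * γ i) ∨ ∀ i, θ * γ i < 0 := by
    rcases hθ with rfl | rfl
    exacts [.inr fun i ↦ by linarith [hγ i], .inl fun i ↦ by linarith [hγ i]]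
  refine not_linear_prod_one_sub_exp hsign (∑ i, γ' i) fun t ht ↦ ?_
  rw [← mul_inv_weighted_mean_const γ' Dφ ψ (hψ t ht)]
  exact heq (fun _ ↦ t) fun _ ↦ ht

/-- Lemma 4 of the paper: the Mitscherlich–Spillman–von Thünen aggregator
`x⋆(x) = Π (1 − exp(θ·γᵢ·xᵢ))` is not an LDA: no strictly convex, twice continuously
differentiable generator `φ` with `φ'' > 0` (with `ψ` a left inverse of `φ'` on `(0,∞)`)
and no positive weights `γ'ᵢ` realize it as
`Γ'·(φ')⁻¹((1/Γ')·Σ γ'ᵢ·φ'(xᵢ))` on `(0,∞)^m`. -/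
theorem statement_18 (m : ℕ) (hm : 1 ≤ m) (θ : ℝ) (hθ : θ = -1 ∨ θ = 1)
    (γ : Fin m → ℝ) (hγ : ∀ i, 0 < γ i) :
    ¬ ∃ (φ Dφ DDφ ψ : ℝ → ℝ) (γ' : Fin m → ℝ),
      StrictConvexOn ℝ (Set.Ioi 0) φ ∧
      (∀ t ∈ Set.Ioi (0:ℝ), HasDerivAt φ (Dφ t) t) ∧
      (∀ t ∈ Set.Ioi (0:ℝ), HasDerivAt Dφ (DDφ t) t) ∧
      ContinuousOn DDφ (Set.Ioi 0) ∧
      (∀ t ∈ Set.Ioi (0:ℝ), 0 < DDφ t) ∧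
      (∀ t ∈ Set.Ioi (0:ℝ), ψ (Dφ t) = t) ∧
      (∀ i, 0 < γ' i) ∧
      (∀ x : Fin m → ℝ, (∀ i, 0 < x i) →
        (∑ i, γ' i) * ψ ((1 / ∑ i, γ' i) * ∑ i, γ' i * Dφ (x i))
          = ∏ i, (1 - Real.exp (θ * γ i * x i))) :=
  statement_18_general m θ hθ γ hγ
end
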